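/- arXiv:1707.06153 — 10 statements merged into one kernel-verified Lean document; each statement's English description precedes it below -/
import Mathlib

section
/- Let G be a finitely generated nilpotent group and H a subgroup of finite index in G. Then the derived subgroup H' has finite index in the derived subgroup G'. -/
open Subgroup
open scoped commutatorElement

universe u

private lemma comm_mul_left' {G : Type*} [Group G] (g h b : G) :
    ⁅g * h, b⁆ = g * ⁅h, b⁆ * g⁻¹ * ⁅g, b⁆ := by group

private lemma comm_pow' {G : Type*} [Group G] {b : G}
    (hb : ∀ x : G, ⁅x, b⁆ ∈ center G) (g : G) (n : ℕ) :
    ⁅g ^ n, b⁆ = ⁅g, b⁆ ^ n := by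
  induction n with
  | zero => simp
  | succ n ih =>
    rw [pow_succ', comm_mul_left', ih, mem_center_iff.mp (pow_mem (hb g) n) g,
      mul_inv_cancel_right, ← pow_succ]

private lemma comm_center_left {G : Type*} [Group G] {z : G}
    (hz : z ∈ center G) (a c : G) : ⁅a * z, c⁆ = ⁅a, c⁆ := by
  rw [comm_mul_left', commutatorElement_eq_one_iff_mul_comm.mpr (mem_center_iff.mp hz c).symm]
  group

private lemma comm_center_eq {G : Type*} [Group G] {z w : G}
    (hz : z ∈ center G) (hw : w ∈ center G) (a b : G) :
    ⁅a * z, b * w⁆ = ⁅a, b⁆ := by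
  rw [comm_center_left hz, ← commutatorElement_inv, comm_center_left hw, commutatorElement_inv]

/-- A f.g. nilpotent group with an abelian normal finite-index subgroup has finite-index
center.  Induction on the nilpotency class. -/
private lemma aux_center : ∀ (n : ℕ) {G : Type u} [Group G] [Group.FG G] [Group.IsNilpotent G]
    (A : Subgroup G) [A.Normal] [A.FiniteIndex],
    Group.nilpotencyClass G ≤ n → (∀ a ∈ A, ∀ b ∈ A, a * b = b * a) →
    (center G).FiniteIndex := by
  intro n
  induction n with
  | zero =>
    intro G _ _ _ A _ _ hc _
    haveI : Subsingleton G := nilpotencyClass_zero_iff_subsingleton.mp (Nat.le_zero.mp hc)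
    haveI : Finite G := Finite.of_subsingleton
    infer_instance
  | succ n ih =>
    intro G _ _ _ A _ _ hc hA
    let mk : G →* G ⧸ center G := QuotientGroup.mk' (center G)
    have hmk : Function.Surjective mk := QuotientGroup.mk_surjective
    haveI : Group.FG (G ⧸ center G) := Group.fg_of_surjective hmk
    let A' : Subgroup (G ⧸ center G) := A.map mk
    haveI : A'.Normal := Subgroup.Normal.map ‹A.Normal› mk hmk
    haveI : A'.FiniteIndex :=
      ⟨ne_zero_of_dvd_ne_zero FiniteIndex.index_ne_zero (A.index_map_dvd hmk)⟩
    have hq : Group.nilpotencyClass (G ⧸ center G) ≤ n := by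
      rw [nilpotencyClass_quotient_center]; omega
    have hA' : ∀ a ∈ A', ∀ b ∈ A', a * b = b * a := by
      rintro _ ⟨a, ha, rfl⟩ _ ⟨b, hb, rfl⟩
      rw [← map_mul, ← map_mul, hA a ha b hb]
    haveI hZQ : (center (G ⧸ center G)).FiniteIndex := ih A' hq hA'
    set Z₂ : Subgroup G := Subgroup.comap mk (center (G ⧸ center G)) with hZ₂def
    haveI : Z₂.FiniteIndex := ⟨by
      rw [hZ₂def, index_comap_of_surjective _ hmk]; exact hZQ.index_ne_zero⟩
    have hZ₂ : ∀ b ∈ Z₂, ∀ g : G, ⁅b, g⁆ ∈ center G := by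
      intro b hb g
      have h1 : mk ⁅b, g⁆ = 1 := by
        rw [map_commutatorElement]
        exact commutatorElement_eq_one_iff_mul_comm.mpr
          (mem_center_iff.mp hb (mk g)).symm
      rwa [← QuotientGroup.ker_mk' (center G), MonoidHom.mem_ker]
    set C : Subgroup G := centralizer (A : Set G) with hCdef
    have hAC : A ≤ C := fun a ha => mem_centralizer_iff.mpr fun h hh => hA h hh a ha
    haveI : C.FiniteIndex := finiteIndex_of_le hAC
    set D : Subgroup G := C.normalCore with hDdef
    haveI : D.FiniteIndex := inferInstance
    set m := D.index with hmdef
    have hm : m ≠ 0 := FiniteIndex.index_ne_zero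
    set B : Subgroup G := A ⊓ Z₂ with hBdef
    haveI : B.FiniteIndex := inferInstance
    have hBZ : ∀ b : B, ∀ x : G, ⁅x, (b : G)⁆ ∈ center G := by
      intro b x
      have := hZ₂ (b : G) b.2.2 x
      rw [← commutatorElement_inv]
      exact inv_mem this
    have key1 : ∀ (b : B) (g : G), ⁅(b : G), g⁆ ^ m = 1 := by
      intro b g
      have hgm : g ^ m ∈ C := C.normalCore_le (D.pow_index_mem g)
      have h1 : ⁅g ^ m, (b : G)⁆ = 1 :=
        commutatorElement_eq_one_iff_mul_comm.mpr
          (mem_centralizer_iff.mp hgm (b : G) b.2.1).symm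
      have h2 : ⁅g, (b : G)⁆ ^ m = 1 := by rw [← comm_pow' (hBZ b) g m, h1]
      rw [← commutatorElement_inv, inv_pow, h2, inv_one]
    have key2 : ∀ g : G, (centralizer {g} ⊓ B).FiniteIndex := by
      intro g
      have hφmem : ∀ b : B, ⁅(b : G), g⁆ ∈ center G := fun b => hZ₂ (b : G) b.2.2 g
      let φ : B →* center G := MonoidHom.mk' (fun b => ⟨⁅(b : G), g⁆, hφmem b⟩) (by
        intro b₁ b₂
        ext
        show ⁅(b₁ : G) * (b₂ : G), g⁆ = ⁅(b₁ : G), g⁆ * ⁅(b₂ : G), g⁆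
        rw [comm_mul_left', mem_center_iff.mp (hφmem b₂) (b₁ : G), mul_inv_cancel_right]
        exact mem_center_iff.mp (hφmem b₁) _)
      haveI : Group.FG B := B.fg_of_index_ne_zero
      haveI : Group.FG φ.range := Group.fg_range φ
      have htor : Monoid.IsTorsion φ.range := by
        rintro ⟨_, b, rfl⟩
        refine isOfFinOrder_iff_pow_eq_one.mpr ⟨m, Nat.pos_of_ne_zero hm, ?_⟩
        ext
        push_cast
        exact key1 b g
      haveI : Finite φ.range := by
        open scoped IsMulCommutative in exact CommGroup.finite_of_fg_torsion _ htor
      have hker : φ.ker.index ≠ 0 := by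
        rw [index_ker]
        exact Nat.card_pos.ne'
      have hle : φ.ker ≤ (centralizer {g} ⊓ B).subgroupOf B := by
        intro b hb
        have h1 : ⁅(b : G), g⁆ = 1 := Subtype.ext_iff.mp hb
        refine mem_subgroupOf.mpr ⟨?_, b.2⟩
        exact mem_centralizer_iff.mpr (by
          rintro h rfl
          exact (commutatorElement_eq_one_iff_mul_comm.mp h1).symm)
      have h1 : (centralizer {g} ⊓ B).relIndex B ≠ 0 :=
        ne_zero_of_dvd_ne_zero hker (index_dvd_of_le hle)
      constructor
      rw [← Subgroup.relIndex_mul_index (inf_le_right : centralizer {g} ⊓ B ≤ B)]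
      exact Nat.mul_ne_zero h1 FiniteIndex.index_ne_zero
    obtain ⟨S, hScl, hSfin⟩ := Group.fg_iff.mp ‹Group.FG G›
    haveI : Finite S := hSfin
    have hfin : (⨅ g : S, (centralizer {(g : G)} ⊓ B)).FiniteIndex :=
      finiteIndex_iInf fun g => key2 (g : G)
    refine finiteIndex_of_le (H := ⨅ g : S, (centralizer {(g : G)} ⊓ B)) ?_
    intro x hx
    rw [Subgroup.mem_iInf] at hx
    rw [Subgroup.mem_center_iff]
    intro y
    have hy : y ∈ Subgroup.closure S := hScl ▸ mem_top y
    have hcy : Commute x y := by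
      refine closure_induction (fun s hs => ?_) (Commute.one_right x)
        (fun a b _ _ ha hb => Commute.mul_right ha hb)
        (fun a _ ha => Commute.inv_right ha) hy
      exact (mem_centralizer_iff.mp (hx ⟨s, hs⟩).1 s rfl).symm
    exact hcy.symm.eq

private lemma fin_commutator {G : Type u} [Group G] [Group.FG G] [Group.IsNilpotent G]
    (A : Subgroup G) [A.Normal] [A.FiniteIndex] (hA : ∀ a ∈ A, ∀ b ∈ A, a * b = b * a) :
    Finite (commutator G) := by
  haveI : (center G).FiniteIndex := aux_center (Group.nilpotencyClass G) A le_rfl hA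
  have hsub : commutatorSet G ⊆ Set.range
      (fun p : (G ⧸ center G) × (G ⧸ center G) => ⁅p.1.out, p.2.out⁆) := by
    rintro _ ⟨a, b, rfl⟩
    refine ⟨(QuotientGroup.mk a, QuotientGroup.mk b), ?_⟩
    have ha : a⁻¹ * (QuotientGroup.mk a : G ⧸ center G).out ∈ center G :=
      QuotientGroup.eq.mp (QuotientGroup.out_eq' _).symm
    have hb : b⁻¹ * (QuotientGroup.mk b : G ⧸ center G).out ∈ center G :=
      QuotientGroup.eq.mp (QuotientGroup.out_eq' _).symm
    show ⁅(QuotientGroup.mk a : G ⧸ center G).out, (QuotientGroup.mk b : G ⧸ center G).out⁆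
        = ⁅a, b⁆
    calc ⁅(QuotientGroup.mk a : G ⧸ center G).out, (QuotientGroup.mk b : G ⧸ center G).out⁆
        = ⁅a * (a⁻¹ * (QuotientGroup.mk a : G ⧸ center G).out),
            b * (b⁻¹ * (QuotientGroup.mk b : G ⧸ center G).out)⁆ := by group
      _ = ⁅a, b⁆ := comm_center_eq ha hb a b
  have hfin : (commutatorSet G).Finite :=
    Set.Finite.subset (Set.finite_range _) hsub
  haveI : Finite (commutatorSet G) := hfin
  infer_instance

theorem stmt1 {G : Type*} [Group G] [Group.FG G] [Group.IsNilpotent G]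
    (H : Subgroup G) [H.FiniteIndex] :
    ((⁅H, H⁆ : Subgroup G).subgroupOf (commutator G)).FiniteIndex := by
  set N := H.normalCore with hN
  haveI : N.Normal := H.normalCore_normal
  set N' : Subgroup G := ⁅N, N⁆ with hN'
  haveI : N'.Normal := Subgroup.commutator_normal N N
  set mk := QuotientGroup.mk' N' with hmk
  have hmks : Function.Surjective mk := QuotientGroup.mk_surjective
  haveI : Group.FG (G ⧸ N') := Group.fg_of_surjective hmks
  set A : Subgroup (G ⧸ N') := N.map mk with hAdef
  haveI : A.Normal := Subgroup.Normal.map ‹N.Normal› mk hmks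
  haveI : A.FiniteIndex :=
    ⟨ne_zero_of_dvd_ne_zero FiniteIndex.index_ne_zero (N.index_map_dvd hmks)⟩
  have hA : ∀ a ∈ A, ∀ b ∈ A, a * b = b * a := by
    rintro _ ⟨a, ha, rfl⟩ _ ⟨b, hb, rfl⟩
    rw [← map_mul, ← map_mul]
    apply (QuotientGroup.eq (s := N')).mpr
    have : (a * b)⁻¹ * (b * a) = ⁅b⁻¹, a⁻¹⁆ := by group
    rw [this]
    exact Subgroup.commutator_mem_commutator (inv_mem hb) (inv_mem ha)
  haveI hfinQ : Finite (commutator (G ⧸ N')) := fin_commutator A hA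
  have hmapcomm : (commutator G).map mk = commutator (G ⧸ N') := by
    show Subgroup.map mk ⁅(⊤ : Subgroup G), ⊤⁆ = ⁅(⊤ : Subgroup (G ⧸ N')), ⊤⁆
    rw [Subgroup.map_commutator, Subgroup.map_top_of_surjective mk hmks]
  haveI : Finite ((commutator G).map mk) := hmapcomm ▸ hfinQ
  constructor
  show ((⁅H, H⁆ : Subgroup G).subgroupOf (commutator G)).index ≠ 0
  have h1 : N'.relIndex (commutator G) ≠ 0 := by
    have h2 := Subgroup.relIndex_ker (K := commutator G) mk
    rw [QuotientGroup.ker_mk'] at h2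
    rw [h2]
    exact Nat.card_pos.ne'
  have h3 : N' ≤ ⁅H, H⁆ :=
    Subgroup.commutator_mono H.normalCore_le H.normalCore_le
  exact ne_zero_of_dvd_ne_zero h1 (Subgroup.relIndex_dvd_of_le_left (L := commutator G) h3)
end

section
/- Let G be a finitely generated nilpotent group and φ an automorphism of G such that the subgroup [G, φ] has finite index in G. Then [G, φ, φ] = [[G, φ], φ] also has finite index in G. -/
universe u

open Subgroup hiding lowerCentralSeries lowerCentralSeries_zero lowerCentralSeries_one nilpotent_iff_lowerCentralSeries
open scoped Pointwise commutatorElement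

section Aux

variable {G : Type u} [Group G]

/-- Conjugation fixes central elements. -/
lemma aux_conj_central {w : G} (hw : w ∈ Subgroup.center G) (b : G) : b * w * b⁻¹ = w := by
  rw [Subgroup.mem_center_iff.mp hw b, mul_inv_cancel_right]

lemma aux_comm_mul_right (a b c : G) : ⁅a, b * c⁆ = ⁅a, b⁆ * (b * ⁅a, c⁆ * b⁻¹) := by
  simp only [commutatorElement_def]; group

lemma aux_comm_mul_left (a b c : G) : ⁅a * b, c⁆ = (a * ⁅b, c⁆ * a⁻¹) * ⁅a, c⁆ := by
  simp only [commutatorElement_def]; group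

/-- Power rule for commutators in the right slot when values are central. -/
lemma aux_comm_pow_right (u g : G) (h : ∀ x : G, ⁅u, x⁆ ∈ Subgroup.center G) (k : ℕ) :
    ⁅u, g ^ k⁆ = ⁅u, g⁆ ^ k := by
  induction k with
  | zero => simp
  | succ k ih =>
    rw [pow_succ', aux_comm_mul_right, aux_conj_central (h _) g, ih, ← pow_succ']

/-- Power rule for commutators in the left slot when values are central. -/
lemma aux_comm_pow_left (u g : G) (h : ∀ i : ℕ, ⁅u ^ i, g⁆ ∈ Subgroup.center G) (k : ℕ) :
    ⁅u ^ k, g⁆ = ⁅u, g⁆ ^ k := by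
  induction k with
  | zero => simp
  | succ k ih =>
    rw [pow_succ', aux_comm_mul_left, aux_conj_central (h k) u, ih]
    exact (pow_succ _ k).symm

lemma aux_comm_central_right {u z : G} (hz : z ∈ Subgroup.center G) : ⁅u, z⁆ = 1 :=
  commutatorElement_eq_one_iff_mul_comm.mpr (Subgroup.mem_center_iff.mp hz u)

lemma aux_comm_central_left {z u : G} (hz : z ∈ Subgroup.center G) : ⁅z, u⁆ = 1 :=
  commutatorElement_eq_one_iff_mul_comm.mpr (Subgroup.mem_center_iff.mp hz u).symm

lemma aux_comm_mem {H : Subgroup G} {a b : G} (ha : a ∈ H) (hb : b ∈ H) : ⁅a, b⁆ ∈ H :=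
  H.mul_mem (H.mul_mem (H.mul_mem ha hb) (H.inv_mem ha)) (H.inv_mem hb)

/-- Decomposition in a sup with a central subgroup. -/
lemma aux_mem_sup_central {H N : Subgroup G} [N.Normal] {x : G}
    (hx : x ∈ H ⊔ N) : ∃ h ∈ H, ∃ z ∈ N, x = h * z := by
  have hx' : x ∈ ((H : Set G) * (N : Set G)) := by
    rw [← Subgroup.mul_normal H N]; exact hx
  obtain ⟨h, hh, z, hz, hxe⟩ := hx'
  exact ⟨h, hh, z, hz, hxe.symm⟩

/-- Commutators of elements of `H ⊔ N`, where `N` is central, lie in `H`. -/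
lemma aux_comm_mem_sup {H N : Subgroup G} [N.Normal] (hN : N ≤ Subgroup.center G) {a b : G}
    (ha : a ∈ H ⊔ N) (hb : b ∈ H ⊔ N) : ⁅a, b⁆ ∈ H := by
  obtain ⟨h₁, hh₁, z₁, hz₁, rfl⟩ := aux_mem_sup_central ha
  obtain ⟨h₂, hh₂, z₂, hz₂, rfl⟩ := aux_mem_sup_central hb
  have heq : ⁅h₁ * z₁, h₂ * z₂⁆ = ⁅h₁, h₂⁆ := by
    rw [aux_comm_mul_left, aux_comm_central_left (hN hz₁), aux_comm_mul_right,
      aux_comm_central_right (hN hz₂)]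
    simp
  rw [heq]
  exact aux_comm_mem hh₁ hh₂

/-- Lower central series of a surjective image. -/
lemma aux_map_lcs {G' : Type u} [Group G'] (f : G →* G') (hf : Function.Surjective f)
    (i : ℕ) : ((⊤ : Subgroup G).lowerCentralSeries i).map f = (⊤ : Subgroup G').lowerCentralSeries i := by
  induction i with
  | zero =>
    simp only [lowerCentralSeries_zero]
    exact Subgroup.map_top_of_surjective f hf
  | succ i ihi =>
    show (⁅(⊤ : Subgroup G).lowerCentralSeries i, ⊤⁆ : Subgroup G).map f = ⁅(⊤ : Subgroup G').lowerCentralSeries i, ⊤⁆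
    rw [Subgroup.map_commutator, ihi, Subgroup.map_top_of_surjective f hf]

/-- The next-to-last term of the lower central series is central. -/
lemma aux_lcs_central {c : ℕ} (hc : (⊤ : Subgroup G).lowerCentralSeries (c + 1) = ⊥) :
    (⊤ : Subgroup G).lowerCentralSeries c ≤ Subgroup.center G := by
  intro n hn
  rw [Subgroup.mem_center_iff]
  intro y
  have h1 : ⁅n, y⁆ ∈ (⁅(⊤ : Subgroup G).lowerCentralSeries c, ⊤⁆ : Subgroup G) :=
    commutator_mem_commutator hn (Subgroup.mem_top y)
  have this : ⁅n, y⁆ ∈ (⊤ : Subgroup G).lowerCentralSeries (c + 1) := h1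
  rw [hc, Subgroup.mem_bot, commutatorElement_eq_one_iff_mul_comm] at this
  exact this.symm

end Aux

/-- Key lemma 1: if `H` has finite index modulo the commutator subgroup of a nilpotent
group `G`, then every element of `G` has a positive power in `H`. -/
lemma key_torsion : ∀ (c : ℕ) {G : Type u} [Group G], (⊤ : Subgroup G).lowerCentralSeries c = ⊥ →
    ∀ H : Subgroup G, (H ⊔ commutator G).FiniteIndex → ∀ g : G, ∃ k, 0 < k ∧ g ^ k ∈ H := by
  intro c
  induction c with
  | zero =>
    intro G _ hc H _ g
    have hg : g ∈ (⊥ : Subgroup G) := hc ▸ Subgroup.mem_top g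
    refine ⟨1, one_pos, ?_⟩
    rw [pow_one, Subgroup.mem_bot.mp hg]
    exact H.one_mem
  | succ c ih =>
    intro G _ hc H hH g
    have hNcent : (⊤ : Subgroup G).lowerCentralSeries c ≤ Subgroup.center G := aux_lcs_central hc
    set N := (⊤ : Subgroup G).lowerCentralSeries c with hNdef
    set π := QuotientGroup.mk' N with hπdef
    have hπsurj : Function.Surjective π := QuotientGroup.mk'_surjective N
    have hQc : (⊤ : Subgroup (G ⧸ N)).lowerCentralSeries c = ⊥ := by
      rw [← aux_map_lcs π hπsurj c, ← hNdef, Subgroup.map_eq_bot_iff, hπdef,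
        QuotientGroup.ker_mk']
    have hQcomm : commutator (G ⧸ N) = (commutator G).map π := by
      rw [commutator_def, commutator_def, Subgroup.map_commutator,
        Subgroup.map_top_of_surjective π hπsurj]
    have hHbar : ((H.map π) ⊔ commutator (G ⧸ N)).FiniteIndex := by
      rw [hQcomm, ← Subgroup.map_sup]
      constructor
      intro h0
      exact hH.index_ne_zero (Nat.eq_zero_of_zero_dvd (h0 ▸ Subgroup.index_map_dvd _ hπsurj))
    have A1 : ∀ x : G, ∃ k, 0 < k ∧ x ^ k ∈ H ⊔ N := by
      intro x
      obtain ⟨k, hk0, hk⟩ := ih hQc (H.map π) hHbar (π x)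
      refine ⟨k, hk0, ?_⟩
      have h1 : π (x ^ k) ∈ H.map π := by rw [map_pow]; exact hk
      have h2 : x ^ k ∈ (H.map π).comap π := Subgroup.mem_comap.mpr h1
      rwa [Subgroup.comap_map_eq, hπdef, QuotientGroup.ker_mk'] at h2
    -- the set of elements of `N` with a positive power in `H` is a subgroup
    let M : Subgroup G :=
      { carrier := {z : G | z ∈ N ∧ ∃ j, 0 < j ∧ z ^ j ∈ H}
        one_mem' := ⟨N.one_mem, 1, one_pos, by simpa using H.one_mem⟩
        mul_mem' := by
          rintro a b ⟨haN, j, hj0, hjH⟩ ⟨hbN, l, hl0, hlH⟩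
          refine ⟨N.mul_mem haN hbN, j * l, Nat.mul_pos hj0 hl0, ?_⟩
          have hab : Commute a b := (Subgroup.mem_center_iff.mp (hNcent haN) b).symm
          rw [hab.mul_pow]
          refine H.mul_mem ?_ ?_
          · rw [pow_mul]; exact pow_mem hjH l
          · rw [mul_comm j l, pow_mul]; exact pow_mem hlH j
        inv_mem' := by
          rintro a ⟨haN, j, hj0, hjH⟩
          exact ⟨N.inv_mem haN, j, hj0, by rw [inv_pow]; exact H.inv_mem hjH⟩ }
    have hNM : N ≤ M := by
      rcases Nat.eq_zero_or_pos c with rfl | hcpos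
      · -- abelian case : `N = ⊤` but also `commutator G = ⊥`, so `H` has finite index
        have hcomm : commutator G = ⊥ := by rw [← lowerCentralSeries_one]; exact hc
        rw [hcomm, sup_bot_eq] at hH
        intro z hz
        obtain ⟨k, hk0, _, hkH⟩ := Subgroup.exists_pow_mem_of_index_ne_zero hH.index_ne_zero z
        exact ⟨hz, k, hk0, hkH⟩
      obtain ⟨c', rfl⟩ := Nat.exists_eq_succ_of_ne_zero (Nat.pos_iff_ne_zero.mp hcpos)
      have hNsucc : N = ⁅(⊤ : Subgroup G).lowerCentralSeries c', ⊤⁆ := hNdef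
      rw [hNsucc, Subgroup.commutator_le]
      intro u hu g' _
      have humem : ∀ x : G, ⁅u, x⁆ ∈ N := by
        intro x
        rw [hNsucc]
        exact commutator_mem_commutator hu (Subgroup.mem_top x)
      have hucent : ∀ x : G, ⁅u, x⁆ ∈ Subgroup.center G := fun x => hNcent (humem x)
      have hucent' : ∀ i : ℕ, ∀ x : G, ⁅u ^ i, x⁆ ∈ Subgroup.center G := by
        intro i x
        refine hNcent ?_
        rw [hNsucc]
        exact commutator_mem_commutator (pow_mem hu i) (Subgroup.mem_top x)
      refine ⟨humem g', ?_⟩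
      obtain ⟨k, hk0, hgk⟩ := A1 g'
      obtain ⟨h, hh, z, hz, hdecomp⟩ := aux_mem_sup_central hgk
      have e1 : ⁅u, g'⁆ ^ k = ⁅u, h⁆ := by
        rw [← aux_comm_pow_right u g' hucent k, hdecomp, aux_comm_mul_right,
          aux_comm_central_right (hNcent hz)]
        simp
      obtain ⟨k', hk'0, huk⟩ := A1 u
      obtain ⟨h₁, hh₁, z₁, hz₁, hdecomp₁⟩ := aux_mem_sup_central huk
      have e2 : ⁅u, h⁆ ^ k' = ⁅h₁, h⁆ := by
        rw [← aux_comm_pow_left u h (fun i => hucent' i h) k', hdecomp₁, aux_comm_mul_left,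
          aux_comm_central_left (hNcent hz₁)]
        simp
      refine ⟨k * k', Nat.mul_pos hk0 hk'0, ?_⟩
      rw [pow_mul, e1, e2]
      exact aux_comm_mem hh₁ hh
    obtain ⟨k, hk0, hgk⟩ := A1 g
    obtain ⟨h, hh, z, hz, hdecomp⟩ := aux_mem_sup_central hgk
    obtain ⟨-, j, hj0, hzj⟩ := hNM hz
    refine ⟨k * j, Nat.mul_pos hk0 hj0, ?_⟩
    have hcz : Commute h z := Subgroup.mem_center_iff.mp (hNcent hz) h
    rw [pow_mul, hdecomp, hcz.mul_pow]
    exact H.mul_mem (pow_mem hh j) hzj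

/-- Key lemma 2: a subgroup of a f.g. nilpotent group such that every element
has a positive power in it has finite index. -/
lemma key_finiteIndex : ∀ (c : ℕ) {G : Type u} [Group G] [Group.FG G],
    (⊤ : Subgroup G).lowerCentralSeries c = ⊥ → ∀ H : Subgroup G,
    (∀ g : G, ∃ k, 0 < k ∧ g ^ k ∈ H) → H.FiniteIndex := by
  intro c
  induction c with
  | zero =>
    intro G _ _ hc H _
    have hsub : Subsingleton G := by
      constructor
      intro a b
      have ha : a ∈ (⊥ : Subgroup G) := hc ▸ Subgroup.mem_top a
      have hb : b ∈ (⊥ : Subgroup G) := hc ▸ Subgroup.mem_top b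
      rw [Subgroup.mem_bot.mp ha, Subgroup.mem_bot.mp hb]
    have : Finite G := Finite.of_subsingleton
    infer_instance
  | succ c ih =>
    intro G _ _ hc H htor
    have hNcent : (⊤ : Subgroup G).lowerCentralSeries c ≤ Subgroup.center G := aux_lcs_central hc
    set N := (⊤ : Subgroup G).lowerCentralSeries c with hNdef
    set π := QuotientGroup.mk' N with hπdef
    have hπsurj : Function.Surjective π := QuotientGroup.mk'_surjective N
    have hQc : (⊤ : Subgroup (G ⧸ N)).lowerCentralSeries c = ⊥ := by
      rw [← aux_map_lcs π hπsurj c, ← hNdef, Subgroup.map_eq_bot_iff, hπdef,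
        QuotientGroup.ker_mk']
    have hHbar : (H.map π).FiniteIndex := by
      refine ih hQc _ ?_
      intro q
      obtain ⟨x, rfl⟩ := hπsurj q
      obtain ⟨k, hk0, hk⟩ := htor x
      exact ⟨k, hk0, by rw [← map_pow]; exact Subgroup.mem_map_of_mem _ hk⟩
    have hT : (H ⊔ N).FiniteIndex := by
      constructor
      have h1 := Subgroup.index_comap_of_surjective (H.map π) hπsurj
      rw [Subgroup.comap_map_eq, hπdef, QuotientGroup.ker_mk'] at h1
      rw [h1]
      exact hHbar.index_ne_zero
    haveI := hT
    haveI : Group.FG ↥(H ⊔ N) := Subgroup.fg_of_index_ne_zero _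
    haveI hnorm : (H.subgroupOf (H ⊔ N)).Normal := by
      constructor
      intro x hx t
      rw [Subgroup.mem_subgroupOf] at hx ⊢
      have h1 : ⁅(t : G), (x : G)⁆ ∈ H := aux_comm_mem_sup hNcent t.2 x.2
      have h2 : ((t * x * t⁻¹ : ↥(H ⊔ N)) : G) = ⁅(t : G), (x : G)⁆ * (x : G) := by
        simp only [commutatorElement_def, Subgroup.coe_mul, Subgroup.coe_inv]
        group
      rw [h2]
      exact H.mul_mem h1 hx
    -- the quotient is a f.g. torsion abelian group, hence finite
    have hcomm : ∀ a b : ↥(H ⊔ N) ⧸ (H.subgroupOf (H ⊔ N)),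
        a * b = b * a := by
      intro a b
      obtain ⟨x, rfl⟩ := QuotientGroup.mk'_surjective _ a
      obtain ⟨y, rfl⟩ := QuotientGroup.mk'_surjective _ b
      rw [← map_mul, ← map_mul]
      show QuotientGroup.mk (x * y) = QuotientGroup.mk (y * x)
      rw [QuotientGroup.eq]
      rw [Subgroup.mem_subgroupOf]
      have h3 : (((x * y)⁻¹ * (y * x) : ↥(H ⊔ N)) : G)
          = ⁅((y : G))⁻¹, ((x : G))⁻¹⁆ := by
        simp only [commutatorElement_def, Subgroup.coe_mul, Subgroup.coe_inv, inv_inv,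
          mul_inv_rev]
        group
      rw [h3]
      exact aux_comm_mem_sup hNcent (Subgroup.inv_mem _ y.2) (Subgroup.inv_mem _ x.2)
    letI : CommGroup (↥(H ⊔ N) ⧸ (H.subgroupOf (H ⊔ N))) :=
      { (inferInstance : Group _) with mul_comm := hcomm }
    have hfin : Finite (↥(H ⊔ N) ⧸ (H.subgroupOf (H ⊔ N))) := by
      apply CommGroup.finite_of_fg_torsion
      intro q
      rw [isOfFinOrder_iff_pow_eq_one]
      obtain ⟨x, rfl⟩ := QuotientGroup.mk'_surjective _ q
      obtain ⟨k, hk0, hk⟩ := htor (x : G)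
      refine ⟨k, hk0, ?_⟩
      rw [← map_pow]
      have : x ^ k ∈ (QuotientGroup.mk' (H.subgroupOf (H ⊔ N))).ker := by
        rw [QuotientGroup.ker_mk', Subgroup.mem_subgroupOf]
        simpa using hk
      exact MonoidHom.mem_ker.mp this
    have hrel : H.relIndex (H ⊔ N) ≠ 0 := by
      have : (H.subgroupOf (H ⊔ N)).index ≠ 0 := by
        haveI := hfin
        rw [Subgroup.index_eq_card]
        exact Nat.card_ne_zero.mpr ⟨inferInstance, inferInstance⟩
      exact this
    constructor
    rw [← Subgroup.relIndex_mul_index (le_sup_left : H ≤ H ⊔ N)]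
    exact mul_ne_zero hrel hT.index_ne_zero

/-- In a commutative group, if `range f` has finite index then so does `range (f ∘ f)`. -/
lemma range_comp_finiteIndex {A : Type u} [CommGroup A] (f : A →* A)
    (hf : f.range.FiniteIndex) : (f.comp f).range.FiniteIndex := by
  haveI := hf
  have hle : (f.comp f).range ≤ f.range := by
    rintro x ⟨a, rfl⟩
    exact ⟨f a, rfl⟩
  set H2 : Subgroup f.range := (f.comp f).range.subgroupOf f.range with hH2
  have hfin : Finite (f.range ⧸ H2) := by
    have hker : f.range ≤ ((QuotientGroup.mk' H2).comp f.rangeRestrict).ker := by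
      rintro x ⟨a, rfl⟩
      rw [MonoidHom.mem_ker, MonoidHom.comp_apply, QuotientGroup.mk'_apply,
        QuotientGroup.eq_one_iff]
      rw [hH2, Subgroup.mem_subgroupOf]
      exact ⟨a, rfl⟩
    have hsurj : Function.Surjective
        (QuotientGroup.lift f.range ((QuotientGroup.mk' H2).comp f.rangeRestrict) hker) := by
      intro x
      obtain ⟨y, hy⟩ := ((QuotientGroup.mk'_surjective H2).comp
        f.rangeRestrict_surjective) x
      exact ⟨QuotientGroup.mk y, hy⟩
    exact Finite.of_surjective _ hsurj
  have hrel : (f.comp f).range.relIndex f.range ≠ 0 := by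
    have : H2.index ≠ 0 := by
      rw [Subgroup.index_eq_card]
      exact Nat.card_ne_zero.mpr ⟨inferInstance, inferInstance⟩
    exact this
  constructor
  rw [← Subgroup.relIndex_mul_index hle]
  exact mul_ne_zero hrel hf.index_ne_zero

/-- The subgroup `[H, φ]` generated by all `g⁻¹ * φ g` with `g ∈ H`. -/
def autComm {G : Type*} [Group G] (φ : MulAut G) (H : Subgroup G) : Subgroup G :=
  Subgroup.closure {x | ∃ g ∈ H, x = g⁻¹ * φ g}

theorem stmt2 {G : Type*} [Group G] [Group.FG G] [Group.IsNilpotent G] (φ : MulAut G)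
    (h : (autComm φ ⊤).FiniteIndex) : (autComm φ (autComm φ ⊤)).FiniteIndex := by
  set π : G →* Abelianization G := Abelianization.of with hπdef
  have hπsurj : Function.Surjective π := QuotientGroup.mk_surjective
  have hker : π.ker = commutator G := by
    apply le_antisymm
    · intro x hx
      exact (QuotientGroup.eq_one_iff x).mp hx
    · exact Abelianization.commutator_subset_ker π
  set f : Abelianization G →* Abelianization G :=
    (Abelianization.map φ.toMonoidHom) * (MonoidHom.id _)⁻¹ with hfdef
  have hfπ : ∀ g : G, π (g⁻¹ * φ g) = f (π g) := by
    intro g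
    rw [hfdef]
    simp only [MonoidHom.mul_apply, MonoidHom.inv_apply, MonoidHom.id_apply, map_mul, map_inv]
    rw [hπdef, Abelianization.map_of]
    exact mul_comm _ _
  have hK : (autComm φ ⊤).map π = f.range := by
    rw [autComm, MonoidHom.map_closure]
    apply le_antisymm
    · rw [Subgroup.closure_le]
      rintro x ⟨y, ⟨g, -, rfl⟩, rfl⟩
      exact ⟨π g, (hfπ g).symm⟩
    · rintro x ⟨a, rfl⟩
      obtain ⟨g, rfl⟩ := hπsurj a
      exact Subgroup.subset_closure ⟨g⁻¹ * φ g, ⟨g, Subgroup.mem_top g, rfl⟩, hfπ g⟩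
  have hL : (autComm φ (autComm φ ⊤)).map π = (f.comp f).range := by
    rw [autComm, MonoidHom.map_closure]
    apply le_antisymm
    · rw [Subgroup.closure_le]
      rintro x ⟨y, ⟨k, hk, rfl⟩, rfl⟩
      have hmem : π k ∈ (autComm φ ⊤).map π := Subgroup.mem_map_of_mem _ hk
      rw [hK] at hmem
      obtain ⟨a, ha⟩ := hmem
      refine ⟨a, ?_⟩
      rw [MonoidHom.comp_apply, ha, ← hfπ k]
    · rintro x ⟨a, rfl⟩
      obtain ⟨g, rfl⟩ := hπsurj a
      have hy : (g⁻¹ * φ g) ∈ autComm φ ⊤ :=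
        Subgroup.subset_closure ⟨g, Subgroup.mem_top g, rfl⟩
      refine Subgroup.subset_closure
        ⟨(g⁻¹ * φ g)⁻¹ * φ (g⁻¹ * φ g), ⟨g⁻¹ * φ g, hy, rfl⟩, ?_⟩
      rw [hfπ, hfπ g]
      rfl
  have hfr : f.range.FiniteIndex := by
    constructor
    intro h0
    refine h.index_ne_zero (Nat.eq_zero_of_zero_dvd ?_)
    have hdvd := Subgroup.index_map_dvd (autComm φ ⊤) hπsurj
    rwa [hK, h0] at hdvd
  have hff := range_comp_finiteIndex f hfr
  have hsup : ((autComm φ (autComm φ ⊤)) ⊔ commutator G).FiniteIndex := by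
    have h1 := Subgroup.index_comap_of_surjective ((autComm φ (autComm φ ⊤)).map π) hπsurj
    rw [Subgroup.comap_map_eq, hker] at h1
    constructor
    rw [h1, hL]
    exact hff.index_ne_zero
  obtain ⟨c, hc⟩ := nilpotent_iff_lowerCentralSeries.mp ‹Group.IsNilpotent G›
  exact key_finiteIndex c hc _ (key_torsion c hc _ hsup)
end

section
/- Let G be a group, x, y ∈ G, and n ≥ 1. Suppose the subgroup E_n(y), generated by all commutators [g, ₙ y] for g ∈ G, satisfies the maximal condition on subgroups. Then the normal closure ⟨x⟩^⟨y⟩ of the cyclic subgroup ⟨x⟩ under conjugation by powers of y is finitely generated. -/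
def engel {G : Type*} [Group G] (y x : G) : ℕ → G
  | 0 => y
  | n+1 => (engel y x n)⁻¹ * x⁻¹ * engel y x n * x

def En {G : Type*} [Group G] (n : ℕ) (x : G) : Subgroup G :=
  Subgroup.closure {g | ∃ y : G, g = engel y x n}

section Aux

variable {G : Type*} [Group G]

lemma engel_conj (g y : G) : ∀ k : ℕ, engel (y⁻¹ * g * y) y k = y⁻¹ * engel g y k * y
  | 0 => rfl
  | (k+1) => by
      show (engel (y⁻¹*g*y) y k)⁻¹ * y⁻¹ * engel (y⁻¹*g*y) y k * y
            = y⁻¹ * ((engel g y k)⁻¹ * y⁻¹ * engel g y k * y) * y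
      rw [engel_conj g y k]; group

lemma engel_succ' (g y : G) (k : ℕ) :
    engel g y (k+1) = (engel g y k)⁻¹ * engel (y⁻¹ * g * y) y k := by
  rw [engel_conj]
  show (engel g y k)⁻¹ * y⁻¹ * engel g y k * y = _
  group

lemma conj_pow_succ (g y : G) (j : ℕ) :
    (y^j)⁻¹ * (y⁻¹ * g * y) * y^j = (y^(j+1))⁻¹ * g * y^(j+1) := by
  rw [pow_succ']
  group

lemma engel_mem (y : G) (L : Subgroup G) :
    ∀ (k : ℕ) (g : G), (∀ j : ℕ, j ≤ k → (y^j)⁻¹ * g * y^j ∈ L) → engel g y k ∈ L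
  | 0, g, h => by simpa [engel] using h 0 (le_refl 0)
  | (k+1), g, h => by
      rw [engel_succ']
      refine mul_mem (inv_mem ?_) ?_
      · exact engel_mem y L k g fun j hj => h j (hj.trans (Nat.le_succ k))
      · refine engel_mem y L k (y⁻¹ * g * y) fun j hj => ?_
        rw [conj_pow_succ]
        exact h (j+1) (Nat.succ_le_succ hj)

lemma engel_forward (y : G) (L : Subgroup G) :
    ∀ (k : ℕ) (g : G), (∀ j : ℕ, j < k → (y^j)⁻¹ * g * y^j ∈ L) →
      engel g y k ∈ L → (y^k)⁻¹ * g * y^k ∈ L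
  | 0, g, _, he => by simpa [engel] using he
  | (k+1), g, h, he => by
      have h1 : engel g y k ∈ L := engel_mem y L k g fun j hj => h j (Nat.lt_succ_of_le hj)
      have h2 : engel (y⁻¹ * g * y) y k ∈ L := by
        have hrw : engel (y⁻¹*g*y) y k = engel g y k * engel g y (k+1) := by
          rw [engel_succ']; group
        rw [hrw]; exact mul_mem h1 he
      have h3 := engel_forward y L k (y⁻¹ * g * y)
        (fun j hj => by
          rw [conj_pow_succ]
          exact h (j+1) (Nat.succ_lt_succ hj)) h2
      rwa [conj_pow_succ] at h3

lemma engel_backward (y : G) (L : Subgroup G) :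
    ∀ (k : ℕ) (g : G), (∀ j : ℕ, 1 ≤ j → j ≤ k → (y^j)⁻¹ * g * y^j ∈ L) →
      engel g y k ∈ L → g ∈ L
  | 0, g, _, he => by simpa [engel] using he
  | (k+1), g, h, he => by
      have h2 : engel (y⁻¹ * g * y) y k ∈ L := by
        refine engel_mem y L k (y⁻¹ * g * y) fun j hj => ?_
        rw [conj_pow_succ]
        exact h (j+1) (Nat.succ_le_succ (Nat.zero_le j)) (Nat.succ_le_succ hj)
      have h1 : engel g y k ∈ L := by
        have hrw : engel g y k = engel (y⁻¹*g*y) y k * (engel g y (k+1))⁻¹ := by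
          rw [engel_succ']; group
        rw [hrw]; exact mul_mem h2 (inv_mem he)
      exact engel_backward y L k g
        (fun j hj1 hj2 => h j hj1 (hj2.trans (Nat.le_succ k))) h1

def Xc (x y : G) (i : ℤ) : G := (y^i)⁻¹ * x * y^i

lemma Xc_conj (x y : G) (i : ℤ) (j : ℕ) :
    (y^j)⁻¹ * Xc x y i * y^j = Xc x y (i + j) := by
  unfold Xc
  rw [zpow_add, zpow_natCast]
  group

def Lc (x y : G) (m : ℕ) : Subgroup G :=
  Subgroup.closure (Xc x y '' Set.Icc (-(m:ℤ)) (m:ℤ))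

lemma Lc_mono (x y : G) {m m' : ℕ} (h : m ≤ m') : Lc x y m ≤ Lc x y m' :=
  Subgroup.closure_mono (Set.image_mono (Set.Icc_subset_Icc (by omega) (by exact_mod_cast h)))

lemma mem_Lc (x y : G) {i : ℤ} {m : ℕ} (h1 : -(m:ℤ) ≤ i) (h2 : i ≤ (m:ℤ)) :
    Xc x y i ∈ Lc x y m :=
  Subgroup.subset_closure ⟨i, ⟨h1, h2⟩, rfl⟩

end Aux

theorem stmt4 {G : Type*} [Group G] (x y : G) (n : ℕ) (hn : 1 ≤ n)
    (hmax : ∀ K : Subgroup G, K ≤ En n y → K.FG) :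
    (Subgroup.closure {g | ∃ k : ℤ, g = (y ^ k)⁻¹ * x * y ^ k}).FG := by
  classical
  set T : Subgroup G := Subgroup.closure {g | ∃ i : ℤ, g = engel (Xc x y i) y n} with hT
  have hTle : T ≤ En n y := by
    rw [hT, Subgroup.closure_le]
    rintro g ⟨i, rfl⟩
    exact Subgroup.subset_closure ⟨Xc x y i, rfl⟩
  obtain ⟨S, hS⟩ := hmax T hTle
  have hdir : Directed (· ≤ ·) (Lc x y) := fun a b =>
    ⟨max a b, Lc_mono x y (le_max_left _ _), Lc_mono x y (le_max_right _ _)⟩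
  have hTsup : T ≤ ⨆ m, Lc x y m := by
    rw [hT, Subgroup.closure_le]
    rintro g ⟨i, rfl⟩
    have hmem : engel (Xc x y i) y n ∈ Lc x y (i.natAbs + n) := by
      apply engel_mem
      intro j hj
      rw [Xc_conj]
      exact mem_Lc x y (by omega) (by omega)
    exact le_iSup (Lc x y) (i.natAbs + n) hmem
  -- bound the generators S inside some Lc m
  have hmemS : ∀ s ∈ S, ∃ m, s ∈ Lc x y m := by
    intro s hs
    have hsT : s ∈ T := hS ▸ Subgroup.subset_closure hs
    exact (Subgroup.mem_iSup_of_directed hdir).1 (hTsup hsT)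
  choose f hf using hmemS
  set m₀ : ℕ := S.attach.sup (fun s => f s.1 s.2) with hm₀
  have hSsub : (S : Set G) ⊆ Lc x y m₀ := by
    intro s hs
    exact Lc_mono x y (Finset.le_sup (Finset.mem_attach S ⟨s, hs⟩)) (hf s hs)
  set M : ℕ := max m₀ n with hM
  have hMn : n ≤ M := le_max_right _ _
  have hTM : T ≤ Lc x y M := by
    rw [← hS, Subgroup.closure_le]
    exact hSsub.trans (Lc_mono x y (le_max_left _ _))
  have key : ∀ d : ℕ, ∀ i : ℤ, -(M:ℤ) - d ≤ i → i ≤ (M:ℤ) + d → Xc x y i ∈ Lc x y M := by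
    intro d
    induction d with
    | zero =>
      intro i h1 h2
      exact mem_Lc x y (by omega) (by omega)
    | succ d ih =>
      intro i h1 h2
      by_cases hc : -(M:ℤ) - d ≤ i ∧ i ≤ (M:ℤ) + d
      · exact ih i hc.1 hc.2
      · push_neg at hc
        have hcase : i = (M:ℤ) + d + 1 ∨ i = -(M:ℤ) - d - 1 := by omega
        rcases hcase with hi | hi
        · have h3 := engel_forward y (Lc x y M) n (Xc x y (i - n))
            (fun j hj => by
              rw [Xc_conj]
              exact ih _ (by omega) (by omega))
            (hTM (Subgroup.subset_closure ⟨i - n, rfl⟩))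
          rw [Xc_conj] at h3
          have : i - (n:ℤ) + (n:ℕ) = i := by push_cast; ring
          rwa [this] at h3
        · exact engel_backward y (Lc x y M) n (Xc x y i)
            (fun j hj1 hj2 => by
              rw [Xc_conj]
              exact ih _ (by omega) (by omega))
            (hTM (Subgroup.subset_closure ⟨i, rfl⟩))
  have heq : Subgroup.closure {g | ∃ k : ℤ, g = (y ^ k)⁻¹ * x * y ^ k} = Lc x y M := by
    apply le_antisymm
    · rw [Subgroup.closure_le]
      rintro g ⟨k, rfl⟩
      exact key k.natAbs k (by omega) (by omega)
    · rw [Lc, Subgroup.closure_le]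
      rintro g ⟨i, _, rfl⟩
      exact Subgroup.subset_closure ⟨i, rfl⟩
  rw [heq]
  exact (Subgroup.fg_iff _).2 ⟨Xc x y '' Set.Icc (-(M:ℤ)) (M:ℤ), rfl,
    (Set.finite_Icc _ _).image _⟩
end

section
/- If G is a group generated by two elements x and y, then the derived subgroup G' is generated by the set of conjugates { [x,y]^{x^r y^s} : r, s ∈ ℤ }. -/
namespace Stmt6Aux

variable {G : Type*} [Group G]

/-- The set of conjugates of `[x,y]` by `x^r * y^s`. -/
def S (x y : G) : Set G :=
  {g | ∃ r s : ℤ, g = (x ^ r * y ^ s)⁻¹ * (x⁻¹ * y⁻¹ * x * y) * (x ^ r * y ^ s)}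

lemma memS (x y : G) (r s : ℤ) :
    (x ^ r * y ^ s)⁻¹ * (x⁻¹ * y⁻¹ * x * y) * (x ^ r * y ^ s) ∈ Subgroup.closure (S x y) :=
  Subgroup.subset_closure ⟨r, s, rfl⟩

lemma conj_mem_of_forall (x y : G) (a : G)
    (hS : ∀ g ∈ S x y, a⁻¹ * g * a ∈ Subgroup.closure (S x y)) :
    ∀ h ∈ Subgroup.closure (S x y), a⁻¹ * h * a ∈ Subgroup.closure (S x y) := by
  intro h hh
  induction hh using Subgroup.closure_induction with
  | mem g hg => exact hS g hg
  | one =>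
      have e : a⁻¹ * 1 * a = 1 := by group
      rw [e]; exact one_mem _
  | mul g k hg hk ihg ihk =>
      have e : a⁻¹ * (g * k) * a = (a⁻¹ * g * a) * (a⁻¹ * k * a) := by group
      rw [e]; exact mul_mem ihg ihk
  | inv g hg ih =>
      have e : a⁻¹ * g⁻¹ * a = (a⁻¹ * g * a)⁻¹ := by group
      rw [e]; exact inv_mem ih

lemma conjY (x y : G) : ∀ h ∈ Subgroup.closure (S x y),
    y⁻¹ * h * y ∈ Subgroup.closure (S x y) := by
  apply conj_mem_of_forall
  rintro g ⟨r, s, rfl⟩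
  have e : y⁻¹ * ((x ^ r * y ^ s)⁻¹ * (x⁻¹ * y⁻¹ * x * y) * (x ^ r * y ^ s)) * y =
      (x ^ r * y ^ (s + 1))⁻¹ * (x⁻¹ * y⁻¹ * x * y) * (x ^ r * y ^ (s + 1)) := by group
  rw [e]; exact memS x y r (s + 1)

lemma conjYinv (x y : G) : ∀ h ∈ Subgroup.closure (S x y),
    y * h * y⁻¹ ∈ Subgroup.closure (S x y) := by
  have := conj_mem_of_forall x y y⁻¹ ?_
  · intro h hh
    have e : y * h * y⁻¹ = y⁻¹⁻¹ * h * y⁻¹ := by group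
    rw [e]; exact this h hh
  · rintro g ⟨r, s, rfl⟩
    have e : y⁻¹⁻¹ * ((x ^ r * y ^ s)⁻¹ * (x⁻¹ * y⁻¹ * x * y) * (x ^ r * y ^ s)) * y⁻¹ =
        (x ^ r * y ^ (s - 1))⁻¹ * (x⁻¹ * y⁻¹ * x * y) * (x ^ r * y ^ (s - 1)) := by group
    rw [e]; exact memS x y r (s - 1)

/-- `[y^s, x] ∈ H` and `[y^s, x⁻¹] ∈ H`. -/
lemma comm_mem (x y : G) (s : ℤ) :
    y ^ (-s) * x⁻¹ * y ^ s * x ∈ Subgroup.closure (S x y) ∧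
      y ^ (-s) * x * y ^ s * x⁻¹ ∈ Subgroup.closure (S x y) := by
  induction s using Int.induction_on with
  | zero =>
      constructor
      · have e : y ^ (-(0:ℤ)) * x⁻¹ * y ^ (0:ℤ) * x = 1 := by group
        rw [e]; exact one_mem _
      · have e : y ^ (-(0:ℤ)) * x * y ^ (0:ℤ) * x⁻¹ = 1 := by group
        rw [e]; exact one_mem _
  | succ s ih =>
      constructor
      · have e : y ^ (-((s:ℤ) + 1)) * x⁻¹ * y ^ ((s:ℤ) + 1) * x =
            (y⁻¹ * (y ^ (-(s:ℤ)) * x⁻¹ * y ^ (s:ℤ) * x) * y) * (y⁻¹ * x⁻¹ * y * x) := by group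
        rw [e]
        refine mul_mem (conjY x y _ ih.1) ?_
        have e2 : y⁻¹ * x⁻¹ * y * x =
            ((x ^ (0:ℤ) * y ^ (0:ℤ))⁻¹ * (x⁻¹ * y⁻¹ * x * y) * (x ^ (0:ℤ) * y ^ (0:ℤ)))⁻¹ := by
          group
        rw [e2]; exact inv_mem (memS x y 0 0)
      · have e : y ^ (-((s:ℤ) + 1)) * x * y ^ ((s:ℤ) + 1) * x⁻¹ =
            (y⁻¹ * (y ^ (-(s:ℤ)) * x * y ^ (s:ℤ) * x⁻¹) * y) * (y⁻¹ * x * y * x⁻¹) := by group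
        rw [e]
        refine mul_mem (conjY x y _ ih.2) ?_
        have e2 : y⁻¹ * x * y * x⁻¹ =
            (x ^ (-1:ℤ) * y ^ (0:ℤ))⁻¹ * (x⁻¹ * y⁻¹ * x * y) * (x ^ (-1:ℤ) * y ^ (0:ℤ)) := by
          group
        rw [e2]; exact memS x y (-1) 0
  | pred s ih =>
      constructor
      · have e : y ^ (-(-(s:ℤ) - 1)) * x⁻¹ * y ^ (-(s:ℤ) - 1) * x =
            (y * (y ^ (-(-(s:ℤ))) * x⁻¹ * y ^ (-(s:ℤ)) * x) * y⁻¹) * (y * x⁻¹ * y⁻¹ * x) := by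
          group
        rw [e]
        refine mul_mem (conjYinv x y _ ih.1) ?_
        have e2 : y * x⁻¹ * y⁻¹ * x =
            (x ^ (0:ℤ) * y ^ (-1:ℤ))⁻¹ * (x⁻¹ * y⁻¹ * x * y) * (x ^ (0:ℤ) * y ^ (-1:ℤ)) := by
          group
        rw [e2]; exact memS x y 0 (-1)
      · have e : y ^ (-(-(s:ℤ) - 1)) * x * y ^ (-(s:ℤ) - 1) * x⁻¹ =
            (y * (y ^ (-(-(s:ℤ))) * x * y ^ (-(s:ℤ)) * x⁻¹) * y⁻¹) * (y * x * y⁻¹ * x⁻¹) := by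
          group
        rw [e]
        refine mul_mem (conjYinv x y _ ih.2) ?_
        have e2 : y * x * y⁻¹ * x⁻¹ =
            ((x ^ (-1:ℤ) * y ^ (-1:ℤ))⁻¹ * (x⁻¹ * y⁻¹ * x * y) * (x ^ (-1:ℤ) * y ^ (-1:ℤ)))⁻¹ := by
          group
        rw [e2]; exact inv_mem (memS x y (-1) (-1))

lemma conjX (x y : G) : ∀ h ∈ Subgroup.closure (S x y),
    x⁻¹ * h * x ∈ Subgroup.closure (S x y) := by
  apply conj_mem_of_forall
  rintro g ⟨r, s, rfl⟩
  have h1 := (comm_mem x y s).1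
  have e : x⁻¹ * ((x ^ r * y ^ s)⁻¹ * (x⁻¹ * y⁻¹ * x * y) * (x ^ r * y ^ s)) * x =
      (y ^ (-s) * x⁻¹ * y ^ s * x)⁻¹ *
        ((x ^ (r + 1) * y ^ s)⁻¹ * (x⁻¹ * y⁻¹ * x * y) * (x ^ (r + 1) * y ^ s)) *
        (y ^ (-s) * x⁻¹ * y ^ s * x) := by group
  rw [e]
  exact mul_mem (mul_mem (inv_mem h1) (memS x y (r + 1) s)) h1

lemma conjXinv (x y : G) : ∀ h ∈ Subgroup.closure (S x y),
    x * h * x⁻¹ ∈ Subgroup.closure (S x y) := by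
  have key : ∀ g ∈ S x y, x⁻¹⁻¹ * g * x⁻¹ ∈ Subgroup.closure (S x y) := by
    rintro g ⟨r, s, rfl⟩
    have h1 := (comm_mem x y s).2
    have e : x⁻¹⁻¹ * ((x ^ r * y ^ s)⁻¹ * (x⁻¹ * y⁻¹ * x * y) * (x ^ r * y ^ s)) * x⁻¹ =
        (y ^ (-s) * x * y ^ s * x⁻¹)⁻¹ *
          ((x ^ (r - 1) * y ^ s)⁻¹ * (x⁻¹ * y⁻¹ * x * y) * (x ^ (r - 1) * y ^ s)) *
          (y ^ (-s) * x * y ^ s * x⁻¹) := by group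
    rw [e]
    exact mul_mem (mul_mem (inv_mem h1) (memS x y (r - 1) s)) h1
  intro h hh
  have e : x * h * x⁻¹ = x⁻¹⁻¹ * h * x⁻¹ := by group
  rw [e]; exact conj_mem_of_forall x y x⁻¹ key h hh

lemma normal (x y : G) (hgen : Subgroup.closure {x, y} = ⊤) :
    (Subgroup.closure (S x y)).Normal := by
  have main : ∀ g : G, (∀ h ∈ Subgroup.closure (S x y), g⁻¹ * h * g ∈ Subgroup.closure (S x y)) ∧
      (∀ h ∈ Subgroup.closure (S x y), g * h * g⁻¹ ∈ Subgroup.closure (S x y)) := by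
    intro g
    have hg : g ∈ Subgroup.closure ({x, y} : Set G) := by rw [hgen]; exact Subgroup.mem_top g
    induction hg using Subgroup.closure_induction with
    | mem a ha =>
        simp only [Set.mem_insert_iff, Set.mem_singleton_iff] at ha
        rcases ha with h | h
        · rw [h]; exact ⟨conjX x y, conjXinv x y⟩
        · rw [h]; exact ⟨conjY x y, conjYinv x y⟩
    | one =>
        constructor <;> intro h hh
        · have e : (1:G)⁻¹ * h * 1 = h := by group
          rw [e]; exact hh
        · have e : (1:G) * h * 1⁻¹ = h := by group
          rw [e]; exact hh
    | mul a b ha hb iha ihb =>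
        constructor <;> intro h hh
        · have e : (a * b)⁻¹ * h * (a * b) = b⁻¹ * (a⁻¹ * h * a) * b := by group
          rw [e]; exact ihb.1 _ (iha.1 h hh)
        · have e : (a * b) * h * (a * b)⁻¹ = a * (b * h * b⁻¹) * a⁻¹ := by group
          rw [e]; exact iha.2 _ (ihb.2 h hh)
    | inv a ha iha =>
        constructor <;> intro h hh
        · have e : a⁻¹⁻¹ * h * a⁻¹ = a * h * a⁻¹ := by group
          rw [e]; exact iha.2 h hh
        · have e : a⁻¹ * h * a⁻¹⁻¹ = a⁻¹ * h * a := by group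
          rw [e]; exact iha.1 h hh
  exact ⟨fun n hn g => (main g).2 n hn⟩

end Stmt6Aux

open scoped commutatorElement

theorem stmt6 {G : Type*} [Group G] (x y : G)
    (hgen : Subgroup.closure {x, y} = ⊤) :
    commutator G =
      Subgroup.closure
        {g | ∃ r s : ℤ, g = (x ^ r * y ^ s)⁻¹ * (x⁻¹ * y⁻¹ * x * y) * (x ^ r * y ^ s)} := by
  show commutator G = Subgroup.closure (Stmt6Aux.S x y)
  have hN : (Subgroup.closure (Stmt6Aux.S x y)).Normal := Stmt6Aux.normal x y hgen
  set H := Subgroup.closure (Stmt6Aux.S x y) with hH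
  apply le_antisymm
  · -- commutator G ≤ H
    rw [commutator_def, Subgroup.commutator_le]
    intro g₁ _ g₂ _
    -- pass to quotient
    let f := QuotientGroup.mk' H
    have hc : (x⁻¹ * y⁻¹ * x * y) ∈ H := by
      have := Stmt6Aux.memS x y 0 0
      simpa using this
    have hxy : ⁅x, y⁆ ∈ H := by
      have e : ⁅x, y⁆ = (x * y) * (x⁻¹ * y⁻¹ * x * y) * (x * y)⁻¹ := by
        rw [commutatorElement_def]; group
      rw [e]; exact hN.conj_mem _ hc _
    have hcomm_xy : Commute (f x) (f y) := by
      rw [← commutatorElement_eq_one_iff_commute, ← map_commutatorElement]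
      exact (QuotientGroup.eq_one_iff _).mpr hxy
    have step1 : ∀ a : G, Commute (f x) (f a) ∧ Commute (f y) (f a) := by
      intro a
      have ha : a ∈ Subgroup.closure ({x, y} : Set G) := by rw [hgen]; exact Subgroup.mem_top a
      induction ha using Subgroup.closure_induction with
      | mem b hb =>
          simp only [Set.mem_insert_iff, Set.mem_singleton_iff] at hb
          rcases hb with h | h
          · rw [h]; exact ⟨Commute.refl _, hcomm_xy.symm⟩
          · rw [h]; exact ⟨hcomm_xy, Commute.refl _⟩
      | one => simpa using ⟨Commute.one_right _, Commute.one_right _⟩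
      | mul a b ha hb iha ihb =>
          exact ⟨by simpa using iha.1.mul_right ihb.1, by simpa using iha.2.mul_right ihb.2⟩
      | inv a ha iha =>
          exact ⟨by simpa using iha.1.inv_right, by simpa using iha.2.inv_right⟩
    have step2 : ∀ a b : G, Commute (f a) (f b) := by
      intro a b
      have ha : a ∈ Subgroup.closure ({x, y} : Set G) := by rw [hgen]; exact Subgroup.mem_top a
      induction ha using Subgroup.closure_induction with
      | mem c hc =>
          simp only [Set.mem_insert_iff, Set.mem_singleton_iff] at hc
          rcases hc with h | h
          · rw [h]; exact (step1 b).1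
          · rw [h]; exact (step1 b).2
      | one => simpa using Commute.one_left _
      | mul c d hc hd ihc ihd => simpa using ihc.mul_left ihd
      | inv c hc ihc => simpa using ihc.inv_left
    have : f ⁅g₁, g₂⁆ = 1 := by
      rw [map_commutatorElement]
      exact commutatorElement_eq_one_iff_commute.mpr (step2 g₁ g₂)
    exact (QuotientGroup.eq_one_iff _).mp this
  · -- H ≤ commutator G
    rw [hH, Subgroup.closure_le]
    rintro g ⟨r, s, rfl⟩
    have hc : (x⁻¹ * y⁻¹ * x * y) ∈ commutator G := by
      have : ⁅x⁻¹, y⁻¹⁆ ∈ commutator G := by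
        rw [commutator_def]
        exact Subgroup.commutator_mem_commutator (Subgroup.mem_top _) (Subgroup.mem_top _)
      have e : ⁅x⁻¹, y⁻¹⁆ = x⁻¹ * y⁻¹ * x * y := by
        rw [commutatorElement_def]; group
      rwa [e] at this
    have := (Subgroup.commutator_normal ⊤ ⊤).conj_mem _ (by rwa [commutator_def] at hc)
      (x ^ r * y ^ s)⁻¹
    rw [commutator_def]
    simpa using this
end

section
/- Let G be a group whose derived subgroup G' is nilpotent, and let N be a normal subgroup of G. Suppose x, y ∈ G are such that x is an Engel element in the subgroup N⟨x⟩ and y is an Engel element in the subgroup N⟨y⟩. Then the product xy is an Engel element in the subgroup N⟨xy⟩. -/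
section aux

variable {G : Type*} [Group G]

open scoped commutatorElement

lemma engel_zero (z x : G) : engel z x 0 = z := rfl

lemma engel_succ (z x : G) (n : ℕ) :
    engel z x (n+1) = (engel z x n)⁻¹ * x⁻¹ * engel z x n * x := rfl

lemma engel_hom {H : Type*} [Group H] (f : G →* H) (z x : G) (n : ℕ) :
    f (engel z x n) = engel (f z) (f x) n := by
  induction n with
  | zero => rfl
  | succ n ih =>
    rw [engel_succ, engel_succ, map_mul, map_mul, map_mul, map_inv, map_inv, ih]

lemma engel_add (z x : G) (m k : ℕ) :
    engel z x (m + k) = engel (engel z x m) x k := by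
  induction k with
  | zero => rfl
  | succ k ih =>
    rw [show m + (k+1) = (m+k)+1 from rfl, engel_succ, ih, engel_succ]

lemma engel_mem_s9 (A : Subgroup G) [hA : A.Normal] {z : G} (x : G) (hz : z ∈ A) (n : ℕ) :
    engel z x n ∈ A := by
  induction n with
  | zero => exact hz
  | succ n ih =>
    rw [engel_succ]
    have h1 : x⁻¹ * engel z x n * x ∈ A := by
      simpa using hA.conj_mem _ ih x⁻¹
    simpa [mul_assoc] using A.mul_mem (A.inv_mem ih) h1

lemma ringlem {R M : Type*} [Ring R] [AddCommGroup M] [Module R M]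
    (a b : R) (hab : Commute a b) (z : M) (mx my : ℕ)
    (ha : a ^ mx • z = 0) (hb : b ^ my • z = 0) :
    (a + b) ^ (mx + my) • z = 0 := by
  rw [hab.add_pow, Finset.sum_smul]
  apply Finset.sum_eq_zero
  intro i hi
  rw [Finset.mem_range] at hi
  have hc : a ^ i * b ^ (mx + my - i) * (((mx+my).choose i : ℕ) : R)
      = (((mx+my).choose i : ℕ) : R) * (a ^ i * b ^ (mx + my - i)) :=
    ((Nat.cast_commute ((mx+my).choose i) (a ^ i * b ^ (mx + my - i))).eq).symm
  rw [hc, mul_smul]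
  suffices h0 : (a ^ i * b ^ (mx + my - i)) • z = 0 by rw [h0, smul_zero]
  by_cases h : mx ≤ i
  · have h2 : a ^ (i - mx) * b ^ (mx + my - i) * a ^ mx = a ^ i * b ^ (mx + my - i) := by
      rw [mul_assoc, ← (hab.pow_pow mx (mx + my - i)).eq, ← mul_assoc, ← pow_add,
        Nat.sub_add_cancel h]
    rw [← h2, mul_smul, ha, smul_zero]
  · have hmy : my ≤ mx + my - i := by omega
    have h2 : a ^ i * b ^ (mx + my - i - my) * b ^ my = a ^ i * b ^ (mx + my - i) := by
      rw [mul_assoc, ← pow_add, Nat.sub_add_cancel hmy]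
    rw [← h2, mul_smul, hb, smul_zero]

def conjHom (A : Subgroup G) [hA : A.Normal] (q : G) : ↥A →* ↥A where
  toFun a := ⟨q⁻¹ * a * q, by simpa using hA.conj_mem _ a.2 q⁻¹⟩
  map_one' := by ext; simp
  map_mul' a b := by ext; simp [mul_assoc]

lemma core {Q : Type*} [Group Q] (A : Subgroup Q) [hA : A.Normal]
    (habel : ∀ a b : ↥A, a * b = b * a)
    (hcomm : ∀ (a : ↥A), ∀ q ∈ commutator Q, (a : Q) * q = q * (a : Q))
    (x y z : Q) (hz : z ∈ A) (mx my : ℕ)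
    (hx : engel z x mx = 1) (hy : engel z y my = 1) :
    engel z (x * y) (my + mx) = 1 := by
  letI cA : CommGroup ↥A := { (inferInstance : Group ↥A) with mul_comm := habel }
  set M := Additive ↥A with hM
  let σ : Q → AddMonoid.End M := fun q => MonoidHom.toAdditive (conjHom A q)
  have σ_apply : ∀ (q : Q) (u : M),
      σ q u = Additive.ofMul (conjHom A q (Additive.toMul u)) := fun q u => rfl
  -- conjugation commuting
  have conj_comm : ∀ a : ↥A, (y*x)⁻¹ * (a : Q) * (y*x) = (x*y)⁻¹ * (a : Q) * (x*y) := by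
    intro a
    have hmem : y*x*y⁻¹*x⁻¹ ∈ commutator Q := by
      have : y*x*y⁻¹*x⁻¹ = ⁅y, x⁆ := rfl
      rw [this]
      exact Subgroup.commutator_mem_commutator (Subgroup.mem_top _) (Subgroup.mem_top _)
    have hc := hcomm a _ hmem
    calc (y*x)⁻¹ * (a : Q) * (y*x)
        = (y*x)⁻¹ * ((a : Q) * (y*x*y⁻¹*x⁻¹)) * (x*y) := by group
      _ = (y*x)⁻¹ * ((y*x*y⁻¹*x⁻¹) * (a : Q)) * (x*y) := by rw [hc]
      _ = (x*y)⁻¹ * (a : Q) * (x*y) := by group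
  have hσcomm : Commute (σ x) (σ y) := by
    show σ x * σ y = σ y * σ x
    apply AddMonoidHom.ext
    intro u
    show σ x (σ y u) = σ y (σ x u)
    apply Additive.toMul.injective
    apply Subtype.ext
    show x⁻¹ * (y⁻¹ * ((Additive.toMul u : ↥A) : Q) * y) * x
        = y⁻¹ * (x⁻¹ * ((Additive.toMul u : ↥A) : Q) * x) * y
    have := conj_comm (Additive.toMul u)
    calc x⁻¹ * (y⁻¹ * ((Additive.toMul u : ↥A) : Q) * y) * x
        = (y*x)⁻¹ * ((Additive.toMul u : ↥A) : Q) * (y*x) := by group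
      _ = (x*y)⁻¹ * ((Additive.toMul u : ↥A) : Q) * (x*y) := this
      _ = y⁻¹ * (x⁻¹ * ((Additive.toMul u : ↥A) : Q) * x) * y := by group
  have hτ : σ y * σ x = σ (x * y) := by
    apply AddMonoidHom.ext
    intro u
    show σ y (σ x u) = σ (x*y) u
    apply Additive.toMul.injective
    apply Subtype.ext
    show y⁻¹ * (x⁻¹ * ((Additive.toMul u : ↥A) : Q) * x) * y
        = (x*y)⁻¹ * ((Additive.toMul u : ↥A) : Q) * (x*y)
    group
  -- translation lemma
  have key : ∀ (q : Q) (n : ℕ) (w : ↥A),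
      ((σ q - 1) ^ n) (Additive.ofMul w)
        = Additive.ofMul (⟨engel (w : Q) q n, engel_mem_s9 A q w.2 n⟩ : ↥A) := by
    intro q n
    induction n with
    | zero =>
      intro w
      show (1 : AddMonoid.End M) (Additive.ofMul w) = _
      rw [AddMonoid.End.one_apply]
      congr 1
    | succ n ih =>
      intro w
      rw [pow_succ']
      show (σ q - 1) (((σ q - 1) ^ n) (Additive.ofMul w)) = _
      rw [ih w]
      set e : ↥A := ⟨engel (w : Q) q n, engel_mem_s9 A q w.2 n⟩ with he
      show σ q (Additive.ofMul e) - Additive.ofMul e = _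
      apply Additive.toMul.injective
      rw [toMul_sub]
      show conjHom A q e / e = _
      rw [div_eq_mul_inv, mul_comm]
      apply Subtype.ext
      show (e : Q)⁻¹ * (q⁻¹ * (e : Q) * q) = engel (w : Q) q (n+1)
      rw [engel_succ]
      show (e : Q)⁻¹ * (q⁻¹ * (e : Q) * q) = (e : Q)⁻¹ * q⁻¹ * e * q
      group
  set zA : ↥A := ⟨z, hz⟩ with hzA
  have hxM : ((σ x - 1) ^ mx) (Additive.ofMul zA) = 0 := by
    rw [key x mx zA]
    have h1 : (⟨engel ((zA : Q)) x mx, engel_mem_s9 A x zA.2 mx⟩ : ↥A) = 1 := by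
      apply Subtype.ext; exact hx
    rw [h1, ofMul_one]
  have hyM : ((σ y - 1) ^ my) (Additive.ofMul zA) = 0 := by
    rw [key y my zA]
    have h1 : (⟨engel ((zA : Q)) y my, engel_mem_s9 A y zA.2 my⟩ : ↥A) = 1 := by
      apply Subtype.ext; exact hy
    rw [h1, ofMul_one]
  -- ring computation
  have hy_x1 : Commute (σ y) (σ x - 1) := hσcomm.symm.sub_right (Commute.one_right (σ y))
  have h1 : Commute (σ y - 1) (σ y) := (Commute.refl (σ y)).sub_left (Commute.one_left (σ y))
  have h2 : Commute (σ y - 1) (σ x - 1) := hy_x1.sub_left (Commute.one_left (σ x - 1))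
  have hab : Commute (σ y - 1) (σ y * (σ x - 1)) := h1.mul_right h2
  have ha : (σ y - 1) ^ my • (Additive.ofMul zA) = 0 := by
    rw [AddMonoid.End.smul_def]; exact hyM
  have hb : (σ y * (σ x - 1)) ^ mx • (Additive.ofMul zA) = 0 := by
    rw [AddMonoid.End.smul_def, hy_x1.mul_pow]
    show (σ y ^ mx) (((σ x - 1) ^ mx) (Additive.ofMul zA)) = 0
    rw [hxM, map_zero]
  have hsum := ringlem (σ y - 1) (σ y * (σ x - 1)) hab (Additive.ofMul zA) my mx ha hb
  have hadd : (σ y - 1) + σ y * (σ x - 1) = σ (x*y) - 1 := by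
    rw [mul_sub, mul_one, ← hτ]; abel
  rw [hadd, AddMonoid.End.smul_def, key (x*y) (my+mx) zA] at hsum
  have h9 := ofMul_eq_zero.mp hsum
  exact congrArg Subtype.val h9

lemma ucs_char (n : ℕ) : (Subgroup.upperCentralSeries G n).Characteristic :=
  ⟨fun ϕ => comap_upperCentralSeries ϕ n⟩

end aux

open scoped Pointwise
open scoped commutatorElement

theorem stmt9 {G : Type*} [Group G] (hnil : Group.IsNilpotent ↥(commutator G))
    (N : Subgroup G) [N.Normal] (x y : G)
    (hx : ∀ g ∈ N ⊔ Subgroup.zpowers x, ∃ m : ℕ, 1 ≤ m ∧ engel g x m = 1)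
    (hy : ∀ g ∈ N ⊔ Subgroup.zpowers y, ∃ m : ℕ, 1 ≤ m ∧ engel g y m = 1) :
    ∀ g ∈ N ⊔ Subgroup.zpowers (x * y), ∃ m : ℕ, 1 ≤ m ∧ engel g (x * y) m = 1 := by
  intro g hg
  obtain ⟨c, hc⟩ := hnil.nilpotent'
  set H := commutator G with hH
  haveI : ∀ j, (Subgroup.upperCentralSeries ↥H j).Characteristic := fun j => ucs_char j
  let B : ℕ → Subgroup G := fun j => Subgroup.map H.subtype (Subgroup.upperCentralSeries ↥H j) ⊓ N
  have hBn : ∀ j, (B j).Normal := by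
    intro j
    haveI h1 : (Subgroup.map H.subtype (Subgroup.upperCentralSeries ↥H j)).Normal :=
      ConjAct.normal_of_characteristic_of_normal
    exact ⟨fun n hn g' => ⟨h1.conj_mem _ hn.1 g', ‹N.Normal›.conj_mem _ hn.2 g'⟩⟩
  -- key structural fact
  have hZsucc : ∀ j, ∀ w ∈ B (j+1), ∀ q ∈ H, w⁻¹ * q⁻¹ * w * q ∈ B j := by
    intro j w hw q hq
    obtain ⟨α, hα, hαw⟩ := hw.1
    constructor
    · refine ⟨α⁻¹ * ⟨q, hq⟩⁻¹ * α * ⟨q, hq⟩, ?_, ?_⟩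
      · have := mem_upperCentralSeries_succ_iff.mp ((Subgroup.upperCentralSeries ↥H (j+1)).inv_mem hα)
          (⟨q, hq⟩ : ↥H)⁻¹
        simpa [commutatorElement_def, inv_inv] using this
      · simp [← hαw]
    · have h2 : q⁻¹ * w * q ∈ N := by simpa using ‹N.Normal›.conj_mem w hw.2 q⁻¹
      simpa [mul_assoc] using N.mul_mem (N.inv_mem hw.2) h2
  have hBH : ∀ j, B j ≤ H := fun j =>
    le_trans inf_le_left (Subgroup.map_subtype_le _)
  -- base case
  have base : ∃ m, 1 ≤ m ∧ engel g (x*y) m ∈ B c := by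
    refine ⟨1, le_refl 1, ?_, ?_⟩
    · rw [hc]
      have hmap : Subgroup.map H.subtype ⊤ = H := by
        rw [← MonoidHom.range_eq_map, Subgroup.range_subtype]
      rw [hmap]
      have h1 : engel g (x*y) 1 = ⁅g⁻¹, (x*y)⁻¹⁆ := by
        rw [engel_succ, engel_zero, commutatorElement_def, inv_inv, inv_inv]
      rw [h1]
      exact Subgroup.commutator_mem_commutator (Subgroup.mem_top _) (Subgroup.mem_top _)
    · refine (QuotientGroup.eq_one_iff _).mp ?_
      have hset : g ∈ (N : Set G) * (Subgroup.zpowers (x*y) : Set G) := by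
        rw [← Subgroup.normal_mul]; exact hg
      obtain ⟨n, hn, w', hw', hprod⟩ := hset
      obtain ⟨k, hk⟩ := Subgroup.mem_zpowers_iff.mp hw'
      have h1 : ((n : G) : G ⧸ N) = 1 := (QuotientGroup.eq_one_iff n).mpr hn
      have hg2 : n * (x*y)^k = g := by rw [hk]; exact hprod
      have hgq : ((g : G) : G ⧸ N) = ((x*y : G) : G ⧸ N) ^ k := by
        rw [← hg2, QuotientGroup.mk_mul, h1, one_mul, QuotientGroup.mk_zpow]
      rw [engel_succ, engel_zero]
      show ((g⁻¹ * (x*y)⁻¹ * g * (x*y) : G) : G ⧸ N) = 1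
      rw [QuotientGroup.mk_mul, QuotientGroup.mk_mul, QuotientGroup.mk_mul,
        QuotientGroup.mk_inv, QuotientGroup.mk_inv, hgq]
      group
  -- descend
  have descend : ∀ j, (∃ m, 1 ≤ m ∧ engel g (x*y) m ∈ B (j+1)) →
      ∃ m, 1 ≤ m ∧ engel g (x*y) m ∈ B j := by
    intro j ⟨m, hm1, hmem⟩
    haveI : (B j).Normal := hBn j
    haveI : (B (j+1)).Normal := hBn (j+1)
    set z := engel g (x*y) m with hzdef
    have hzN : z ∈ N := hmem.2
    obtain ⟨mx, hmx1, hmx⟩ := hx z (Subgroup.mem_sup_left hzN)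
    obtain ⟨my, hmy1, hmy⟩ := hy z (Subgroup.mem_sup_left hzN)
    set π := QuotientGroup.mk' (B j) with hπ
    set A : Subgroup (G ⧸ B j) := Subgroup.map π (B (j+1)) with hA
    haveI : A.Normal := Subgroup.Normal.map (hBn (j+1)) π (QuotientGroup.mk'_surjective _)
    have habel : ∀ a b : ↥A, a * b = b * a := by
      intro a b
      obtain ⟨a', ha', haa⟩ := Subgroup.mem_map.mp a.2
      obtain ⟨b', hb', hbb⟩ := Subgroup.mem_map.mp b.2
      apply Subtype.ext
      show (a : G ⧸ B j) * b = (b : G ⧸ B j) * a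
      rw [← haa, ← hbb, ← map_mul, ← map_mul]
      have heq : (a' * b')⁻¹ * (b' * a') = b'⁻¹ * a'⁻¹ * b' * a' := by group
      apply (QuotientGroup.mk'_eq_mk' _).mpr
      refine ⟨(a' * b')⁻¹ * (b' * a'), ?_, by group⟩
      rw [heq]
      exact hZsucc j b' hb' a' (hBH (j+1) ha')
    have hcomm : ∀ (a : ↥A), ∀ q ∈ commutator (G ⧸ B j), (a : G ⧸ B j) * q = q * a := by
      intro a q hq
      obtain ⟨a', ha', haa⟩ := Subgroup.mem_map.mp a.2
      have hcq : commutator (G ⧸ B j) = Subgroup.map π H := by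
        rw [hH, commutator_def, commutator_def, Subgroup.map_commutator,
          Subgroup.map_top_of_surjective π (QuotientGroup.mk'_surjective _)]
      rw [hcq] at hq
      obtain ⟨q', hq', hqq⟩ := Subgroup.mem_map.mp hq
      rw [← haa, ← hqq, ← map_mul, ← map_mul]
      apply (QuotientGroup.mk'_eq_mk' _).mpr
      refine ⟨(a' * q')⁻¹ * (q' * a'), ?_, by group⟩
      have heq : (a' * q')⁻¹ * (q' * a') = (a'⁻¹ * q'⁻¹ * a' * q')⁻¹ := by group
      rw [heq]
      exact (B j).inv_mem (hZsucc j a' ha' q' hq')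
    have hzA : π z ∈ A := Subgroup.mem_map_of_mem π hmem
    have hx' : engel (π z) (π x) mx = 1 := by
      rw [← engel_hom, hmx, map_one]
    have hy' : engel (π z) (π y) my = 1 := by
      rw [← engel_hom, hmy, map_one]
    have hcore := core A habel hcomm (π x) (π y) (π z) hzA mx my hx' hy'
    have hfin : engel z (x*y) (my+mx) ∈ B j := by
      apply (QuotientGroup.eq_one_iff _).mp
      have : ((engel z (x*y) (my+mx) : G) : G ⧸ B j) = π (engel z (x*y) (my+mx)) := rfl
      rw [this, engel_hom, map_mul]
      exact hcore
    refine ⟨m + (my + mx), by omega, ?_⟩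
    rw [engel_add]
    exact hfin
  -- descend to 0
  have all : ∀ j, (∃ m, 1 ≤ m ∧ engel g (x*y) m ∈ B j) →
      ∃ m : ℕ, 1 ≤ m ∧ engel g (x * y) m = 1 := by
    intro j
    induction j with
    | zero =>
      intro ⟨m, h1, h2⟩
      refine ⟨m, h1, ?_⟩
      have := h2.1
      rw [Subgroup.upperCentralSeries_zero, Subgroup.map_bot] at this
      simpa using this
    | succ j ih => intro h; exact ih (descend j h)
  exact all c base
end

section
/- Let α be an automorphism of a group G that centralizes a normal subgroup N of G of finite index m (i.e. α fixes every element of N pointwise). Then α^{m!} is an inner automorphism of G. -/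
open Equiv in
private lemma perm_aux {X : Type*} [Fintype X] [DecidableEq X] (e : Equiv.Perm X) (x0 : X)
    (h : e x0 = x0) (x : X) : (e ^ (Fintype.card X - 1).factorial) x = x := by
  by_cases hx : x = x0
  · subst hx
    induction (Fintype.card X - 1).factorial with
    | zero => simp
    | succ k ih => rw [pow_succ']; simp [Equiv.Perm.mul_apply, h, ih]
  · have hiff : ∀ y : X, y ≠ x0 ↔ e y ≠ x0 := by
      intro y
      constructor
      · intro hy hey; exact hy (e.injective (hey.trans h.symm))
      · intro hey hy; subst hy; exact hey h
    set σ : Equiv.Perm {y : X // y ≠ x0} := e.subtypePerm (fun y => (hiff y).symm) with hσ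
    have hcard : Fintype.card {y : X // y ≠ x0} = Fintype.card X - 1 := by
      rw [show Fintype.card {y : X // y ≠ x0} = Fintype.card {y : X // ¬ y = x0} from rfl]
      rw [Fintype.card_subtype_compl, Fintype.card_subtype_eq]
    have hone : σ ^ (Fintype.card X - 1).factorial = 1 := by
      rw [← hcard, ← Fintype.card_perm]
      exact pow_card_eq_one
    have := congrArg (fun (τ : Equiv.Perm {y : X // y ≠ x0}) => (τ ⟨x, hx⟩ : X)) hone
    simpa [hσ, Equiv.Perm.subtypePerm_pow, Equiv.Perm.subtypePerm_apply] using this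

theorem stmt10 {G : Type*} [Group G] (φ : MulAut G) (N : Subgroup G) [N.Normal]
    (m : ℕ) (hm : N.index = m) (hm0 : m ≠ 0)
    (hcent : ∀ x ∈ N, φ x = x) :
    ∃ g : G, φ ^ m.factorial = MulAut.conj g := by
  classical
  have hfin : Finite (G ⧸ N) := by
    refine Nat.finite_of_card_ne_zero ?_
    rwa [← Subgroup.index, hm]
  have : Fintype (G ⧸ N) := Fintype.ofFinite _
  have hcard : Fintype.card (G ⧸ N) = m := by
    rw [← hm, Subgroup.index, Nat.card_eq_fintype_card]
  -- every power of φ fixes N pointwise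
  have hcentpow : ∀ (k : ℕ), ∀ x ∈ N, (φ ^ k) x = x := by
    intro k
    induction k with
    | zero => intro x _; rfl
    | succ k ih =>
      intro x hx
      rw [pow_succ]
      change (φ ^ k) (φ x) = x
      rw [hcent x hx]; exact ih x hx
  have hcentinv : ∀ x ∈ N, φ⁻¹ x = x := by
    intro x hx
    apply φ.injective
    change φ (φ⁻¹ x) = φ x
    rw [hcent x hx]
    exact φ.apply_symm_apply x
  -- induced permutation on the quotient
  have hlift : ∀ (ρ : MulAut G), (∀ x ∈ N, ρ x = x) →
      ∀ (a b : G), @Setoid.r _ (QuotientGroup.leftRel N) a b → (QuotientGroup.mk (ρ a) : G ⧸ N) = QuotientGroup.mk (ρ b) := by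
    intro ρ hρ a b hab
    rw [QuotientGroup.leftRel_apply] at hab
    rw [QuotientGroup.eq]
    have : (ρ a)⁻¹ * ρ b = ρ (a⁻¹ * b) := by rw [map_mul, map_inv]
    rw [this, hρ _ hab]
    exact hab
  let ψ : Equiv.Perm (G ⧸ N) :=
  { toFun := fun q => Quotient.liftOn' q (fun x => (QuotientGroup.mk (φ x) : G ⧸ N)) (hlift φ hcent)
    invFun := fun q => Quotient.liftOn' q (fun x => (QuotientGroup.mk (φ⁻¹ x) : G ⧸ N)) (hlift φ⁻¹ hcentinv)
    left_inv := by
      intro q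
      induction q using Quotient.inductionOn' with
      | h x => simp [Quotient.liftOn'_mk'']
    right_inv := by
      intro q
      induction q using Quotient.inductionOn' with
      | h x => simp [Quotient.liftOn'_mk''] }
  have hψpow : ∀ (k : ℕ) (x : G), (ψ ^ k) (QuotientGroup.mk x) = QuotientGroup.mk ((φ ^ k) x) := by
    intro k
    induction k with
    | zero => intro x; rfl
    | succ k ih =>
      intro x
      rw [pow_succ, pow_succ]
      change (ψ ^ k) (ψ (QuotientGroup.mk x)) = QuotientGroup.mk ((φ ^ k) (φ x))
      have : ψ (QuotientGroup.mk x) = QuotientGroup.mk (φ x) := rfl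
      rw [this, ih]
  -- the (m-1)! power
  obtain ⟨n, rfl⟩ : ∃ n, m = n + 1 := Nat.exists_eq_succ_of_ne_zero hm0
  have hψ1 : ψ (1 : G ⧸ N) = 1 := by
    have : ((1 : G ⧸ N)) = QuotientGroup.mk (1 : G) := rfl
    rw [this]
    change QuotientGroup.mk (φ 1) = QuotientGroup.mk (1 : G)
    rw [map_one]
  have hψfact : ∀ q : G ⧸ N, (ψ ^ n.factorial) q = q := by
    have := perm_aux ψ 1 hψ1
    rwa [hcard, Nat.succ_sub_one] at this
  set β : MulAut G := φ ^ n.factorial with hβ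
  have hβN : ∀ x ∈ N, β x = x := hcentpow n.factorial
  have hβQ : ∀ x : G, β x * x⁻¹ ∈ N := by
    intro x
    have h1 : (QuotientGroup.mk (β x) : G ⧸ N) = QuotientGroup.mk x := by
      rw [← hψpow]; exact hψfact _
    rw [QuotientGroup.eq] at h1
    have := Subgroup.Normal.conj_mem ‹N.Normal› _ (N.inv_mem h1) x
    convert this using 1
    group
  set f : G → G := fun x => β x * x⁻¹ with hf
  have hfN : ∀ x, f x ∈ N := hβQ
  have key : ∀ x : G, ∀ nn ∈ N, β x * nn * (β x)⁻¹ = x * nn * x⁻¹ := by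
    intro x nn hnn
    have h1 : β (x * nn * x⁻¹) = x * nn * x⁻¹ :=
      hβN _ (Subgroup.Normal.conj_mem ‹N.Normal› _ hnn x)
    calc β x * nn * (β x)⁻¹ = β (x * nn * x⁻¹) := by
          rw [map_mul, map_mul, map_inv, hβN nn hnn]
      _ = x * nn * x⁻¹ := h1
  have hfcomm : ∀ x : G, ∀ nn ∈ N, f x * nn = nn * f x := by
    intro x nn hnn
    have h2 := key x (x⁻¹ * nn * x) (by simpa using Subgroup.Normal.conj_mem ‹N.Normal› _ hnn x⁻¹)
    have h3 : x * (x⁻¹ * nn * x) * x⁻¹ = nn := by group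
    rw [h3] at h2
    rw [hf]
    calc β x * x⁻¹ * nn = (β x * (x⁻¹ * nn * x) * (β x)⁻¹) * (β x * x⁻¹) := by group
      _ = nn * (β x * x⁻¹) := by rw [h2]
  have hcocycle : ∀ x y : G, f (x * y) = f x * (x * f y * x⁻¹) := by
    intro x y
    rw [hf]
    simp only [map_mul]
    group
  -- the abelian subgroup A = N ⊓ centralizer N
  set A : Subgroup G := N ⊓ Subgroup.centralizer (N : Set G) with hA
  letI : CommGroup A :=
    { (inferInstance : Group A) with mul_comm := fun a b => Subtype.ext ((a.2.2 b b.2.1).symm) }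
  have hfA : ∀ x, f x ∈ A := by
    intro x
    refine ⟨hfN x, ?_⟩
    intro g hg
    exact (hfcomm x g hg).symm
  set fA : G → A := fun x => ⟨f x, hfA x⟩ with hfAdef
  -- conjugation preserves A
  have hconjA : ∀ (x : G) (a : G), a ∈ A → x * a * x⁻¹ ∈ A := by
    intro x a ha
    refine ⟨Subgroup.Normal.conj_mem ‹N.Normal› _ ha.1 x, ?_⟩
    intro g hg
    have hginv : x⁻¹ * g * x ∈ N := by
      simpa using Subgroup.Normal.conj_mem ‹N.Normal› _ hg x⁻¹
    have := ha.2 _ hginv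
    calc g * (x * a * x⁻¹) = x * ((x⁻¹ * g * x) * a) * x⁻¹ := by group
      _ = x * (a * (x⁻¹ * g * x)) * x⁻¹ := by rw [this]
      _ = x * a * x⁻¹ * g := by group
  set cA : G → (A →* A) := fun x =>
    { toFun := fun a => ⟨x * a * x⁻¹, hconjA x a a.2⟩
      map_one' := by ext; simp
      map_mul' := by intro a b; ext; show x * (↑a * ↑b) * x⁻¹ = (x * ↑a * x⁻¹) * (x * ↑b * x⁻¹); group } with hcA
  -- F on the quotient
  have hFwd : ∀ (a b : G), @Setoid.r _ (QuotientGroup.leftRel N) a b → fA a = fA b := by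
    intro a b hab
    rw [QuotientGroup.leftRel_apply] at hab
    ext
    show f a = f b
    obtain ⟨nn, hnn, hb⟩ : ∃ nn ∈ N, b = a * nn := ⟨a⁻¹ * b, hab, by group⟩
    subst hb
    symm
    show β (a * nn) * (a * nn)⁻¹ = β a * a⁻¹
    rw [map_mul, hβN nn hnn, mul_inv_rev]
    group
  set F : G ⧸ N → A := fun q => Quotient.liftOn' q fA hFwd with hF
  have hFmk : ∀ x : G, F (QuotientGroup.mk x) = fA x := fun x => rfl
  set P : A := ∏ q : G ⧸ N, F q with hP
  -- the key identity
  have hkey : ∀ x : G, (fA x) ^ (n + 1) * cA x P = P := by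
    intro x
    have h1 : ∀ q : G ⧸ N, F (QuotientGroup.mk x * q) = fA x * cA x (F q) := by
      intro q
      induction q using Quotient.inductionOn' with
      | h y =>
        have h0 : (QuotientGroup.mk x * Quotient.mk'' y : G ⧸ N) = QuotientGroup.mk (x * y) := rfl
        rw [h0]
        have h2 : F (Quotient.mk'' y) = fA y := rfl
        rw [hFmk, h2]
        ext
        show f (x * y) = f x * (x * f y * x⁻¹)
        exact hcocycle x y
    have h3 : ∏ q : G ⧸ N, (fA x * cA x (F q)) = P := by
      rw [Finset.prod_congr rfl fun q _ => (h1 q).symm, hP]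
      exact Equiv.prod_comp (Equiv.mulLeft (QuotientGroup.mk x)) F
    have h4 : ∏ q : G ⧸ N, (fA x * cA x (F q)) = (fA x) ^ (n + 1) * cA x P := by
      rw [Finset.prod_mul_distrib, Finset.prod_const, Finset.card_univ, hcard,
        ← map_prod (cA x) F Finset.univ]
    rw [← h4, h3]
  -- conclude
  refine ⟨(P : G), ?_⟩
  have hβkN : ∀ (k : ℕ), ∀ x ∈ N, (β ^ k) x = x := by
    intro k
    induction k with
    | zero => intro x _; rfl
    | succ k ih =>
      intro x hx
      rw [pow_succ]
      change (β ^ k) (β x) = x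
      rw [hβN x hx]; exact ih x hx
  have hβm : ∀ (k : ℕ) (x : G), (β ^ k) x = f x ^ k * x := by
    intro k
    induction k with
    | zero => intro x; simp
    | succ k ih =>
      intro x
      rw [pow_succ]
      change (β ^ k) (β x) = f x ^ (k + 1) * x
      have h0 : β x = f x * x := by rw [hf]; group
      rw [h0, map_mul, hβkN k (f x) (hfN x), ih x, pow_succ']
      group
  have hfxm : ∀ x : G, f x ^ (n + 1) = (P : G) * (x * (P : G) * x⁻¹)⁻¹ := by
    intro x
    have h1 := congrArg (Subtype.val) (hkey x)
    push_cast at h1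
    have h2 : ((cA x P : A) : G) = x * (P : G) * x⁻¹ := rfl
    rw [h2] at h1
    exact eq_mul_inv_of_mul_eq h1
  have hfact : (n + 1).factorial = n.factorial * (n + 1) := by
    rw [Nat.factorial_succ, Nat.mul_comm]
  ext x
  show (φ ^ (n + 1).factorial) x = MulAut.conj (P : G) x
  rw [hfact, pow_mul, ← hβ, hβm, hfxm, MulAut.conj_apply]
  group
end

section
/- Let G be an orderable group and x, y ∈ G such that [x, y^m] = 1 for some m ≥ 1. Then [x, y] = 1. -/
/-- A group is orderable if it admits a bi-invariant linear order. -/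
def IsOrderable (G : Type*) [Group G] : Prop :=
  ∃ r : G → G → Prop, IsLinearOrder G r ∧ ∀ a b x y : G, r x y → r (a*x*b) (a*y*b)

theorem stmt12 {G : Type*} [Group G] (hG : IsOrderable G) (x y : G) (m : ℕ) (hm : 1 ≤ m)
    (h : x⁻¹ * (y ^ m)⁻¹ * x * y ^ m = 1) : x⁻¹ * y⁻¹ * x * y = 1 := by
  obtain ⟨r, hlin, hinv⟩ := hG
  have htrans : ∀ a b c : G, r a b → r b c → r a c := fun a b c =>
    hlin.toIsPartialOrder.toIsPreorder.toIsTrans.trans a b c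
  have hanti : ∀ a b : G, r a b → r b a → a = b := fun a b =>
    hlin.toIsPartialOrder.toAntisymm.antisymm a b
  -- strict powers lemma
  have key : ∀ (a b : G), r a b → a ≠ b → ∀ n, 1 ≤ n → r (a^n) (b^n) ∧ a^n ≠ b^n := by
    intro a b hab hne n hn
    induction n with
    | zero => omega
    | succ k ih =>
      rcases Nat.lt_or_ge 1 (k+1) with h1 | h1
      · have hk : 1 ≤ k := by omega
        obtain ⟨ih1, ih2⟩ := ih hk
        have s1 : r (a^(k+1)) (a * b^k) := by
          have := hinv a 1 (a^k) (b^k) ih1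
          simpa [pow_succ', mul_assoc] using this
        have s2 : r (a * b^k) (b^(k+1)) := by
          have := hinv 1 (b^k) a b hab
          simpa [pow_succ', mul_assoc] using this
        have s3 : a * b^k ≠ b^(k+1) := by
          rw [pow_succ']
          intro hh; exact hne (mul_right_cancel hh)
        refine ⟨htrans _ _ _ s1 s2, ?_⟩
        intro hEq
        apply s3
        exact hanti _ _ s2 (hEq ▸ s1)
      · have : k = 0 := by omega
        subst this
        simpa using ⟨hab, hne⟩
  -- x commutes with y^m
  have hcomm : x * y ^ m = y ^ m * x := by
    have := congrArg (fun g => y ^ m * x * g) h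
    simpa [mul_assoc] using this
  set z := x⁻¹ * y * x with hz
  have hzm : z ^ m = y ^ m := by
    have h1 : z ^ m = x⁻¹ * y ^ m * x := by
      have := conj_pow (a := x⁻¹) (b := y) (i := m)
      simpa [hz] using this
    rw [h1, mul_assoc, ← hcomm, ← mul_assoc, inv_mul_cancel, one_mul]
  have hzy : z = y := by
    by_contra hne
    rcases hlin.toTotal.total z y with h1 | h1
    · exact (key z y h1 hne m hm).2 hzm
    · exact (key y z h1 (Ne.symm hne) m hm).2 hzm.symm
  have hyx : y * x = x * y := by
    have := congrArg (fun g => x * g) hzy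
    simpa [hz, mul_assoc] using this
  rw [mul_assoc, ← hyx, ← mul_assoc, mul_assoc (x⁻¹ * y⁻¹), ← mul_assoc]
  simp
end

section
/- Let G be an orderable group having a nilpotent subgroup N of finite index. Then G itself is nilpotent, of the same nilpotency class as N. -/
universe u

/-- Property (C): powers commuting implies commuting. -/
def PropC (H : Type*) [Group H] : Prop :=
  ∀ (x y : H) (n : ℕ), 0 < n → Commute (x ^ n) y → Commute x y

/-- Torsion-freeness. -/
def PropT (H : Type*) [Group H] : Prop :=
  ∀ (x : H) (n : ℕ), 0 < n → x ^ n = 1 → x = 1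

section Orderable

variable {G : Type*} [Group G]

/-- In a bi-ordered group, strict inequalities propagate to powers. -/
theorem orderable_strict_pow {r : G → G → Prop} (hlin : IsLinearOrder G r)
    (hinv : ∀ a b x y : G, r x y → r (a*x*b) (a*y*b)) {x x' : G}
    (hr : r x x') (hne : x ≠ x') : ∀ k : ℕ, 0 < k → r (x ^ k) (x' ^ k) ∧ x ^ k ≠ x' ^ k := by
  intro k hk
  induction k with
  | zero => omega
  | succ k ih =>
    rcases Nat.eq_zero_or_pos k with hk0 | hk0
    · subst hk0; simpa using ⟨hr, hne⟩
    obtain ⟨ihr, ihne⟩ := ih hk0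
    have h1 : r (x * x ^ k) (x * x' ^ k) := by
      simpa using hinv x 1 _ _ ihr
    have h2 : r (x * x' ^ k) (x' * x' ^ k) := by
      simpa using hinv 1 (x' ^ k) x x' hr
    rw [pow_succ', pow_succ']
    refine ⟨hlin.trans _ _ _ h1 h2, ?_⟩
    intro heq
    have h2' : r (x * x' ^ k) (x * x ^ k) := by
      rw [show x * x ^ k = x' * x' ^ k from heq]; exact h2
    have : x * x ^ k = x * x' ^ k := hlin.antisymm _ _ h1 h2'
    exact ihne (mul_left_cancel this)

theorem IsOrderable.propT (hG : IsOrderable G) : PropT G := by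
  obtain ⟨r, hlin, hinv⟩ := hG
  intro x n hn hxn
  by_contra hne
  rcases hlin.total x 1 with h | h
  · have := (orderable_strict_pow hlin hinv h hne n hn).2
    simp [hxn] at this
  · have := (orderable_strict_pow hlin hinv h (Ne.symm hne) n hn).2
    simp [hxn] at this

theorem IsOrderable.propC (hG : IsOrderable G) : PropC G := by
  obtain ⟨r, hlin, hinv⟩ := hG
  intro x y n hn hcomm
  set x' := y * x * y⁻¹ with hx'
  have hxn : x' ^ n = x ^ n := by
    rw [hx', conj_pow, ← hcomm.eq, mul_assoc, mul_inv_cancel, mul_one]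
  have hxx' : x = x' := by
    by_contra hne
    rcases hlin.total x x' with h | h
    · exact (orderable_strict_pow hlin hinv h hne n hn).2 hxn.symm
    · exact (orderable_strict_pow hlin hinv h (Ne.symm hne) n hn).2 hxn
  have h : y * x * y⁻¹ = x := by rw [← hx', ← hxx']
  show x * y = y * x
  calc x * y = (y * x * y⁻¹) * y := by rw [h]
  _ = y * x := by group

end Orderable

section Quotient

variable {H : Type*} [Group H]

/-- Property (C) passes to the quotient by the center. -/
theorem PropC.quotient_center (hC : PropC H) : PropC (H ⧸ Subgroup.center H) := by
  intro a b n hn hcomm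
  obtain ⟨x, rfl⟩ := QuotientGroup.mk_surjective a
  obtain ⟨y, rfl⟩ := QuotientGroup.mk_surjective b
  have hconj : ((y : H ⧸ Subgroup.center H))⁻¹ * (x : H ⧸ Subgroup.center H) ^ n * y
      = (x : H ⧸ Subgroup.center H) ^ n := by
    rw [mul_assoc, hcomm.eq, ← mul_assoc, inv_mul_cancel, one_mul]
  -- z := x⁻ⁿ * (y⁻¹ * xⁿ * y) is central
  have hz : (x ^ n)⁻¹ * (y⁻¹ * x ^ n * y) ∈ Subgroup.center H := by
    rw [← QuotientGroup.eq_one_iff]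
    simp only [QuotientGroup.mk_mul, QuotientGroup.mk_inv, QuotientGroup.mk_pow]
    rw [hconj]
    exact inv_mul_cancel _
  set z : H := (x ^ n)⁻¹ * (y⁻¹ * x ^ n * y) with hzdef
  have hzcomm : ∀ t : H, z * t = t * z := fun t => (Subgroup.mem_center_iff.mp hz t).symm
  set w : H := y⁻¹ * x * y with hwdef
  have hwn : w ^ n = x ^ n * z := by
    have h1 : w ^ n = y⁻¹ * x ^ n * y := by
      rw [hwdef, show y⁻¹ * x * y = y⁻¹ * x * (y⁻¹)⁻¹ by rw [inv_inv], conj_pow, inv_inv]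
    rw [h1, hzdef]; group
  have hcwx : Commute w x := by
    apply hC w x n hn
    rw [hwn]
    exact Commute.mul_left ((Commute.refl x).pow_left n) (hzcomm x)
  have hun : (w * x⁻¹) ^ n = z := by
    have hcwxi : Commute w x⁻¹ := hcwx.inv_right
    rw [hcwxi.mul_pow, hwn, inv_pow, ← hzcomm (x ^ n)]
    exact mul_inv_cancel_right z (x ^ n)
  have hu : w * x⁻¹ ∈ Subgroup.center H := by
    rw [Subgroup.mem_center_iff]
    intro t
    have : Commute (w * x⁻¹) t := hC _ t n hn (by rw [hun]; exact hzcomm t)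
    exact this.eq.symm
  have hwx : (w : H ⧸ Subgroup.center H) = x := by
    have h1 : ((w * x⁻¹ : H) : H ⧸ Subgroup.center H) = 1 := (QuotientGroup.eq_one_iff _).mpr hu
    rw [QuotientGroup.mk_mul, QuotientGroup.mk_inv, mul_inv_eq_one] at h1
    exact h1
  have hkey : ((y : H ⧸ Subgroup.center H))⁻¹ * x * y = x := by
    have hw2 : ((w : H) : H ⧸ Subgroup.center H)
        = ((y : H ⧸ Subgroup.center H))⁻¹ * x * y := by
      rw [hwdef]; simp
    rw [← hw2, hwx]
  show (x : H ⧸ Subgroup.center H) * y = y * x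
  calc (x : H ⧸ Subgroup.center H) * y
      = y * (((y : H ⧸ Subgroup.center H))⁻¹ * x * y) := by
        rw [← mul_assoc, ← mul_assoc, mul_inv_cancel, one_mul]
  _ = y * x := by rw [hkey]

/-- Torsion-freeness of the central quotient, from Property (C). -/
theorem PropC.propT_quotient_center (hC : PropC H) : PropT (H ⧸ Subgroup.center H) := by
  intro a n hn ha
  obtain ⟨x, rfl⟩ := QuotientGroup.mk_surjective a
  rw [← QuotientGroup.mk_pow, QuotientGroup.eq_one_iff] at ha
  rw [QuotientGroup.eq_one_iff, Subgroup.mem_center_iff]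
  intro t
  exact (hC x t n hn ((Subgroup.mem_center_iff.mp ha t).symm)).eq.symm

end Quotient

/-- Lower central series maps onto lower central series under surjections. -/
theorem lcs_map_surjective {G G' : Type*} [Group G] [Group G'] (f : G →* G')
    (hf : Function.Surjective f) (n : ℕ) :
    Subgroup.map f ((⊤ : Subgroup G).lowerCentralSeries n) = (⊤ : Subgroup G').lowerCentralSeries n := by
  induction n with
  | zero =>
    simp only [lowerCentralSeries_zero]
    rw [← MonoidHom.range_eq_map]
    exact MonoidHom.range_eq_top.mpr hf
  | succ n ih =>
    have h1 : (⊤ : Subgroup G).lowerCentralSeries (n+1) = ⁅(⊤ : Subgroup G).lowerCentralSeries n, (⊤ : Subgroup G)⁆ := by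
      rw [lowerCentralSeries_succ]
    have h2 : (⊤ : Subgroup G').lowerCentralSeries (n+1) = ⁅(⊤ : Subgroup G').lowerCentralSeries n, (⊤ : Subgroup G')⁆ := by
      rw [lowerCentralSeries_succ]
    rw [h1, h2, Subgroup.map_commutator, ih, ← MonoidHom.range_eq_map,
      MonoidHom.range_eq_top.mpr hf]

open scoped commutatorElement

/-- The main engine: if `H` has property (C), is torsion-free, and has a subgroup `K`
into which every element has a positive power, with `γ_c(K) = ⊥`, then `ζ_c(H) = ⊤`. -/
theorem main_engine : ∀ (c : ℕ) (H : Type u) [Group H] (K : Subgroup H),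
    PropC H → PropT H → (∀ g : H, ∃ n : ℕ, 0 < n ∧ g ^ n ∈ K) →
    (⊤ : Subgroup ↥K).lowerCentralSeries c = ⊥ → Subgroup.upperCentralSeries H c = ⊤ := by
  intro c
  induction c with
  | zero =>
    intro H _ K hC hT hpow hγ
    have hK : ∀ k ∈ K, k = 1 := by
      intro k hk
      have h0 : (⟨k, hk⟩ : ↥K) ∈ (⊤ : Subgroup ↥K).lowerCentralSeries 0 := by
        rw [lowerCentralSeries_zero]; trivial
      rw [hγ, Subgroup.mem_bot] at h0
      exact congrArg Subtype.val h0
    rw [eq_top_iff]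
    intro g _
    rw [upperCentralSeries_zero, Subgroup.mem_bot]
    obtain ⟨n, hn, hgn⟩ := hpow g
    exact hT g n hn (hK _ hgn)
  | succ c ih =>
    intro H _ K hC hT hpow hγ
    set Z := Subgroup.center H
    set π := QuotientGroup.mk' Z with hπ
    set K' : Subgroup (H ⧸ Z) := K.map π with hK'
    -- elements commuting with all of K are central in H
    have hcentral : ∀ z : H, (∀ k ∈ K, Commute z k) → z ∈ Z := by
      intro z hzk
      rw [Subgroup.mem_center_iff]
      intro g
      obtain ⟨n, hn, hgn⟩ := hpow g
      exact (hC g z n hn (hzk _ hgn).symm).eq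
    -- γ_c(K) consists of elements central in H
    have hγc : ∀ x : ↥K, x ∈ (⊤ : Subgroup ↥K).lowerCentralSeries c → (x : H) ∈ Z := by
      intro x hx
      apply hcentral
      intro k hk
      have hcomm : ⁅x, (⟨k, hk⟩ : ↥K)⁆ ∈ (⊤ : Subgroup ↥K).lowerCentralSeries (c+1) := by
        have h1 : (⊤ : Subgroup ↥K).lowerCentralSeries (c+1) = ⁅(⊤ : Subgroup ↥K).lowerCentralSeries c, (⊤ : Subgroup ↥K)⁆ := by
          rw [lowerCentralSeries_succ]
        rw [h1]
        exact Subgroup.commutator_mem_commutator hx (Subgroup.mem_top _)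
      rw [hγ, Subgroup.mem_bot] at hcomm
      have hcs : Commute x (⟨k, hk⟩ : ↥K) := commutatorElement_eq_one_iff_commute.mp hcomm
      show (x : H) * k = k * (x : H)
      exact Subtype.ext_iff.mp hcs.eq
    -- the restriction of π to K
    set φ : ↥K →* ↥K' := π.subgroupMap K with hφ
    have hφs : Function.Surjective φ := MonoidHom.subgroupMap_surjective π K
    have hγ' : (⊤ : Subgroup ↥K').lowerCentralSeries c = ⊥ := by
      rw [← lcs_map_surjective φ hφs c, Subgroup.map_eq_bot_iff]
      intro x hx
      rw [MonoidHom.mem_ker]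
      apply Subtype.ext
      show π (x : H) = 1
      rw [hπ]
      exact (QuotientGroup.eq_one_iff _).mpr (hγc x hx)
    have hpow' : ∀ q : H ⧸ Z, ∃ n : ℕ, 0 < n ∧ q ^ n ∈ K' := by
      intro q
      obtain ⟨g, rfl⟩ := QuotientGroup.mk_surjective q
      obtain ⟨n, hn, hgn⟩ := hpow g
      exact ⟨n, hn, ⟨g ^ n, hgn, by simp [π]⟩⟩
    have hQ : Subgroup.upperCentralSeries (H ⧸ Z) c = ⊤ :=
      ih (H ⧸ Z) K' hC.quotient_center hC.propT_quotient_center hpow' hγ'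
    have hcmp := comap_upperCentralSeries_quotient_center (G := H) c
    rw [hQ] at hcmp
    rw [← hcmp]
    simp

theorem stmt14 {G : Type*} [Group G] (hG : IsOrderable G) (N : Subgroup G)
    [N.FiniteIndex] [Group.IsNilpotent ↥N] :
    Group.IsNilpotent G ∧
      ∀ c : ℕ, (⊤ : Subgroup ↥N).lowerCentralSeries c = ⊥ ↔ (⊤ : Subgroup G).lowerCentralSeries c = ⊥ := by
  have hC := hG.propC
  have hT := hG.propT
  -- every element has a positive power in N
  have hpow : ∀ g : G, ∃ n : ℕ, 0 < n ∧ g ^ n ∈ N := by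
    intro g
    obtain ⟨i, j, hne, hij⟩ :=
      Finite.exists_ne_map_eq_of_infinite (fun k : ℕ => ((g ^ k : G) : G ⧸ N))
    have key : ∀ i j : ℕ, i < j → ((g ^ i : G) : G ⧸ N) = ((g ^ j : G) : G ⧸ N) →
        g ^ (j - i) ∈ N := by
      intro i j hlt heq
      have hmem : (g ^ i)⁻¹ * g ^ j ∈ N := QuotientGroup.eq.mp heq
      have hpw : g ^ (j - i) = (g ^ i)⁻¹ * g ^ j := by
        rw [eq_inv_mul_iff_mul_eq, ← pow_add]
        congr 1
        omega
      rwa [hpw]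
    rcases Nat.lt_or_ge i j with h | h
    · exact ⟨j - i, by omega, key i j h hij⟩
    · have hji : j < i := by omega
      exact ⟨i - j, by omega, key j i hji hij.symm⟩
  have key : ∀ c : ℕ, (⊤ : Subgroup ↥N).lowerCentralSeries c = ⊥ → (⊤ : Subgroup G).lowerCentralSeries c = ⊥ := by
    intro c hc
    have hζ : upperCentralSeries G c = ⊤ := main_engine c G N hC hT hpow hc
    haveI : Group.IsNilpotent G := ⟨⟨c, hζ⟩⟩
    rw [lowerCentralSeries_eq_bot_iff_nilpotencyClass_le]
    exact upperCentralSeries_eq_top_iff_nilpotencyClass_le.mp hζ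
  have key2 : ∀ c : ℕ, (⊤ : Subgroup G).lowerCentralSeries c = ⊥ → (⊤ : Subgroup ↥N).lowerCentralSeries c = ⊥ := by
    intro c hc
    have h := lowerCentralSeries_map_subtype_le N c
    rw [hc] at h
    rw [eq_bot_iff]
    intro x hx
    have hx1 : (x : G) ∈ (⊥ : Subgroup G) := h ⟨x, hx, rfl⟩
    rw [Subgroup.mem_bot] at hx1
    rw [Subgroup.mem_bot]
    exact Subtype.ext hx1
  refine ⟨?_, fun c => ⟨key c, key2 c⟩⟩
  obtain ⟨c, hc⟩ := nilpotent_iff_lowerCentralSeries.mp (inferInstance : Group.IsNilpotent ↥N)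
  exact nilpotent_iff_lowerCentralSeries.mpr ⟨c, key c hc⟩
end

section
/- In an ordered group G (with bi-invariant order), if (C, D) is a convex jump, then C is normal in D and the quotient D/C is abelian. -/
/-- A subgroup of an ordered group is convex if `1 ≤ x ≤ c ∈ C` implies `x ∈ C`. -/
def IsConvexSub {G : Type*} [Group G] [LinearOrder G] (C : Subgroup G) : Prop :=
  ∀ x : G, ∀ c ∈ C, 1 ≤ x → x ≤ c → x ∈ C

section Helpers
variable {G : Type*} [Group G] [LinearOrder G]

lemma my_cov (hco : ∀ a b x y : G, x ≤ y → a * x * b ≤ a * y * b) :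
    CovariantClass G G (· * ·) (· ≤ ·) := ⟨fun a x y h => by simpa using hco a 1 x y h⟩

lemma my_cov_swap (hco : ∀ a b x y : G, x ≤ y → a * x * b ≤ a * y * b) :
    CovariantClass G G (Function.swap (· * ·)) (· ≤ ·) :=
  ⟨fun b x y h => by simpa using hco 1 b x y h⟩

/-- Convex subgroups form a chain. -/
lemma convex_chain (hco : ∀ a b x y : G, x ≤ y → a * x * b ≤ a * y * b)
    (C1 C2 : Subgroup G) (h1 : IsConvexSub C1) (h2 : IsConvexSub C2) :
    C1 ≤ C2 ∨ C2 ≤ C1 := by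
  haveI := my_cov hco; haveI := my_cov_swap hco
  by_contra hcon
  push_neg at hcon
  obtain ⟨hn1, hn2⟩ := hcon
  obtain ⟨x, hx1, hx2⟩ := SetLike.not_le_iff_exists.mp hn1
  obtain ⟨y, hy2, hy1⟩ := SetLike.not_le_iff_exists.mp hn2
  -- replace by positive representatives
  have wlogpos : ∀ (S T : Subgroup G), ∀ x : G, x ∈ S → x ∉ T →
      ∃ z : G, z ∈ S ∧ z ∉ T ∧ 1 ≤ z := by
    intro S T z hzS hzT
    rcases le_total 1 z with h | h
    · exact ⟨z, hzS, hzT, h⟩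
    · refine ⟨z⁻¹, inv_mem hzS, fun hh => hzT (by simpa using inv_mem hh), ?_⟩
      simpa using inv_le_inv_iff.mpr h
  obtain ⟨x', hx'1, hx'2, hx'p⟩ := wlogpos _ _ x hx1 hx2
  obtain ⟨y', hy'2, hy'1, hy'p⟩ := wlogpos _ _ y hy2 hy1
  rcases le_total x' y' with h | h
  · exact hx'2 (h2 x' y' hy'2 hx'p h)
  · exact hy'1 (h1 y' x' hx'1 hy'p h)

end Helpers

theorem stmt16 {G : Type*} [Group G] [LinearOrder G]
    (hco : ∀ a b x y : G, x ≤ y → a * x * b ≤ a * y * b)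
    (C D : Subgroup G) (hC : IsConvexSub C) (hD : IsConvexSub D) (hlt : C < D)
    (hjump : ¬ ∃ H : Subgroup G, IsConvexSub H ∧ C < H ∧ H < D) :
    (∀ d ∈ D, ∀ c ∈ C, d⁻¹ * c * d ∈ C) ∧
      ∀ a ∈ D, ∀ b ∈ D, a⁻¹ * b⁻¹ * a * b ∈ C := by
  haveI := my_cov hco; haveI := my_cov_swap hco
  haveI : CovariantClass G G (· * ·) (· < ·) :=
    ⟨fun a p q hpq => lt_of_le_of_ne (mul_le_mul_right hpq.le a)
      (fun e => hpq.ne (mul_left_cancel e))⟩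
  haveI : CovariantClass G G (Function.swap (· * ·)) (· < ·) :=
    ⟨fun a p q hpq => lt_of_le_of_ne (mul_le_mul_left hpq.le a)
      (fun e => hpq.ne (mul_right_cancel e))⟩
  -- Step 2 : normality
  have step2 : ∀ d ∈ D, ∀ x : G, d * x * d⁻¹ ∈ C → x ∈ C := by
    intro d hd
    set Hd : Subgroup G :=
      { carrier := {x | d * x * d⁻¹ ∈ C}
        one_mem' := by simpa using C.one_mem
        mul_mem' := by
          intro p q hp hq
          have hp' : d * p * d⁻¹ ∈ C := hp
          have hq' : d * q * d⁻¹ ∈ C := hq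
          have := mul_mem hp' hq'
          show d * (p * q) * d⁻¹ ∈ C
          convert this using 1
          group
        inv_mem' := by
          intro p hp
          have hp' : d * p * d⁻¹ ∈ C := hp
          have := inv_mem hp'
          show d * p⁻¹ * d⁻¹ ∈ C
          convert this using 1
          group } with hHdd
    have memHd : ∀ x : G, x ∈ Hd ↔ d * x * d⁻¹ ∈ C := fun x => Iff.rfl
    have hHdconv : IsConvexSub Hd := by
      intro w c hc h1 h2
      rw [memHd] at hc ⊢
      refine hC _ _ hc ?_ (hco d d⁻¹ w c h2)
      have := hco d d⁻¹ 1 w h1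
      simpa using this
    have hHdD : Hd ≤ D := by
      intro x hx
      rw [memHd] at hx
      have hx' : d * x * d⁻¹ ∈ D := hlt.le hx
      have : x = d⁻¹ * (d * x * d⁻¹) * d := by group
      rw [this]
      exact mul_mem (mul_mem (inv_mem hd) hx') hd
    have : Hd ≤ C := by
      rcases convex_chain hco C Hd hC hHdconv with h | h
      · rcases lt_or_eq_of_le h with h' | h'
        · exfalso
          apply hjump
          refine ⟨Hd, hHdconv, h', lt_of_le_of_ne hHdD ?_⟩
          intro hEq
          obtain ⟨w, hwD, hwC⟩ := SetLike.not_le_iff_exists.mp (not_le_of_gt hlt)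
          have hxD : d⁻¹ * w * d ∈ D := mul_mem (mul_mem (inv_mem hd) hwD) hd
          rw [← hEq, memHd] at hxD
          have : d * (d⁻¹ * w * d) * d⁻¹ = w := by group
          rw [this] at hxD
          exact hwC hxD
        · exact h'.ge
      · exact h
    intro x hx
    exact this ((memHd x).mpr hx)
  have conj_mem : ∀ d ∈ D, ∀ c ∈ C, d⁻¹ * c * d ∈ C := by
    intro d hd c hc
    apply step2 d hd
    have : d * (d⁻¹ * c * d) * d⁻¹ = c := by group
    rw [this]; exact hc
  have conj_mem' : ∀ d ∈ D, ∀ c ∈ C, d * c * d⁻¹ ∈ C := by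
    intro d hd c hc
    have := conj_mem d⁻¹ (inv_mem hd) c hc
    simpa using this
  refine ⟨conj_mem, ?_⟩
  -- small helpers
  have one_le_pow : ∀ b : G, 1 ≤ b → ∀ n : ℕ, (1:G) ≤ b ^ n := by
    intro b hb n
    induction n with
    | zero => simp
    | succ n ih =>
      rw [pow_succ]
      calc (1:G) = 1 * 1 := by simp
      _ ≤ b ^ n * b := mul_le_mul' ih hb
  -- Step 3 : Archimedean mod C
  have arch : ∀ b, b ∈ D → b ∉ C → 1 ≤ b →
      ∀ a ∈ D, ∃ n : ℕ, a ≤ b ^ n ∧ a⁻¹ ≤ b ^ n := by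
    intro b hbD hbC hb1
    set H : Subgroup G :=
      { carrier := {x | ∃ n : ℕ, x ≤ b ^ n ∧ x⁻¹ ≤ b ^ n}
        one_mem' := ⟨0, by simp⟩
        mul_mem' := by
          rintro p q ⟨n, hp1, hp2⟩ ⟨m, hq1, hq2⟩
          refine ⟨n + m, ?_, ?_⟩
          · rw [pow_add]; exact mul_le_mul' hp1 hq1
          · rw [show n + m = m + n by omega, pow_add, mul_inv_rev]
            exact mul_le_mul' hq2 hp2
        inv_mem' := by
          rintro p ⟨n, hp1, hp2⟩
          exact ⟨n, hp2, by simpa using hp1⟩ } with hHdef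
    have memH : ∀ x : G, x ∈ H ↔ ∃ n : ℕ, x ≤ b ^ n ∧ x⁻¹ ≤ b ^ n := fun x => Iff.rfl
    have hHconv : IsConvexSub H := by
      rintro x c ⟨n, hc1, _⟩ h1 h2
      refine ⟨n, le_trans h2 hc1, ?_⟩
      calc x⁻¹ ≤ 1 := by simpa using inv_le_inv_iff.mpr h1
      _ ≤ b ^ n := one_le_pow b hb1 n
    have hHD : H ≤ D := by
      rintro x ⟨n, hx1, hx2⟩
      have hbn : b ^ n ∈ D := pow_mem hbD n
      rcases le_total 1 x with h | h
      · exact hD x _ hbn h hx1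
      · have : x⁻¹ ∈ D := hD x⁻¹ _ hbn (by simpa using inv_le_inv_iff.mpr h) hx2
        simpa using inv_mem this
    have hCH : C ≤ H := by
      intro c hc
      have key : ∀ w : G, w ∈ C → w ≤ b := by
        intro w hw
        rcases le_total w 1 with h | h
        · exact le_trans h hb1
        · by_contra hcon
          exact hbC (hC b w hw hb1 (le_of_not_ge hcon))
      exact ⟨1, by simpa using key c hc, by simpa using key c⁻¹ (inv_mem hc)⟩
    have hbH : b ∈ H := ⟨1, by simp, by
      simp only [pow_one]
      calc b⁻¹ ≤ 1 := by simpa using inv_le_inv_iff.mpr hb1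
      _ ≤ b := hb1⟩
    have hCHlt : C < H := lt_of_le_of_ne hCH (fun e => hbC (e ▸ hbH))
    have hHeq : H = D := by
      rcases lt_or_eq_of_le hHD with h | h
      · exact absurd ⟨H, hHconv, hCHlt, h⟩ hjump
      · exact h
    intro a ha
    rw [← hHeq] at ha
    exact ha
  -- floor : for z > 1 generating D mod C, locate any x between consecutive powers
  have floor : ∀ z, z ∈ D → 1 < z →
      (∀ a ∈ D, ∃ n : ℕ, a ≤ z ^ n ∧ a⁻¹ ≤ z ^ n) →
      ∀ x ∈ D, ∃ m : ℤ, z ^ m ≤ x ∧ x < z ^ (m + 1) := by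
    intro z hzD hz1 harch x hx
    obtain ⟨n₁, hx1, hx2⟩ := harch x hx
    set y : G := z ^ n₁ * x with hy
    have h1y : (1:G) ≤ y := by
      have := mul_le_mul_left hx2 x
      simpa using this
    have hyb : y < z ^ (n₁ + n₁ + 1) := by
      calc y ≤ z ^ n₁ * z ^ n₁ := mul_le_mul_right hx1 _
      _ = z ^ (n₁ + n₁) := (pow_add z n₁ n₁).symm
      _ = z ^ (n₁ + n₁) * 1 := (mul_one _).symm
      _ < z ^ (n₁ + n₁) * z := mul_lt_mul_right hz1 _
      _ = z ^ (n₁ + n₁ + 1) := (pow_succ z _).symm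
    have hP : ∃ k : ℕ, y < z ^ k := ⟨n₁ + n₁ + 1, hyb⟩
    set k₀ := Nat.find hP with hk₀def
    have hk₀ : y < z ^ k₀ := Nat.find_spec hP
    have hk₀ne : k₀ ≠ 0 := by
      intro h
      rw [h] at hk₀
      simp at hk₀
      exact absurd h1y (not_le_of_gt hk₀)
    obtain ⟨k', hk'⟩ := Nat.exists_eq_succ_of_ne_zero hk₀ne
    have hlow : z ^ k' ≤ y := by
      have := Nat.find_min hP (m := k') (by omega)
      exact le_of_not_gt this
    have hxy : x = z ^ (-(n₁:ℤ)) * y := by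
      rw [hy, ← mul_assoc, zpow_neg, zpow_natCast, inv_mul_cancel, one_mul]
    refine ⟨(k' : ℤ) - n₁, ?_, ?_⟩
    · have : z ^ ((k':ℤ) - n₁) = z ^ (-(n₁:ℤ)) * z ^ (k' : ℤ) := by
        rw [← zpow_add]; ring_nf
      rw [this, hxy]
      apply mul_le_mul_right
      rw [zpow_natCast]; exact hlow
    · have h2 : z ^ ((k':ℤ) - n₁ + 1) = z ^ (-(n₁:ℤ)) * z ^ ((k' + 1 : ℕ) : ℤ) := by
        rw [← zpow_add]; push_cast; ring_nf
      rw [h2, hxy, zpow_natCast]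
      apply mul_lt_mul_right
      rw [show k' + 1 = k₀ by omega]; exact hk₀
  -- key commutator lemma for "positive" commutators
  have key : ∀ a ∈ D, ∀ b ∈ D, 1 ≤ a⁻¹ * b⁻¹ * a * b → a⁻¹ * b⁻¹ * a * b ∈ C := by
    intro a ha b hb hg1
    by_contra hgC
    set g : G := a⁻¹ * b⁻¹ * a * b with hgdef
    have hgD : g ∈ D := mul_mem (mul_mem (mul_mem (inv_mem ha) (inv_mem hb)) ha) hb
    have hg1' : 1 < g := lt_of_le_of_ne hg1 (fun h => hgC (h ▸ C.one_mem))
    -- Hölder estimate: g < t * t for every positive t ∈ D \ C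
    have L1 : ∀ t, t ∈ D → t ∉ C → 1 < t → g < t * t := by
      intro t htD htC ht1
      have hfl := floor t htD ht1 (arch t htD htC ht1.le)
      obtain ⟨m, ham, ham'⟩ := hfl a ha
      obtain ⟨n, hbn, hbn'⟩ := hfl b hb
      have hab : a * b < t ^ (m + n + 2) := by
        calc a * b < t ^ (m+1) * b := mul_lt_mul_left ham' b
        _ < t ^ (m+1) * t ^ (n+1) := mul_lt_mul_right hbn' _
        _ = t ^ (m + n + 2) := by rw [← zpow_add]; ring_nf
      have hba : t ^ (n + m) ≤ b * a := by
        rw [zpow_add]; exact mul_le_mul' hbn ham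
      have hinv : (b * a)⁻¹ ≤ t ^ (-(n + m)) := by
        rw [zpow_neg]
        exact inv_le_inv_iff.mpr hba
      have hgeq : g = (b * a)⁻¹ * (a * b) := by rw [hgdef]; group
      calc g = (b * a)⁻¹ * (a * b) := hgeq
      _ ≤ t ^ (-(n + m)) * (a * b) := mul_le_mul_left hinv _
      _ < t ^ (-(n + m)) * t ^ (m + n + 2) := mul_lt_mul_right hab _
      _ = t ^ (2:ℤ) := by rw [← zpow_add]; ring_nf
      _ = t * t := by
        rw [show (2:ℤ) = 1 + 1 by norm_num, zpow_add, zpow_one]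
    -- minimality: g is essentially the least positive element mod C
    have L2 : ∀ t, t ∈ D → t ∉ C → 1 < t → g ≤ t ∨ g * t⁻¹ ∈ C := by
      intro t htD htC ht1
      by_contra hcon
      push_neg at hcon
      obtain ⟨hgt', huC⟩ := hcon
      set u : G := g * t⁻¹ with hu
      have hu1 : 1 < u := by
        have h := mul_lt_mul_left hgt' t⁻¹
        rw [show t * t⁻¹ = 1 by group] at h
        exact h
      have huD : u ∈ D := mul_mem hgD (inv_mem htD)
      have h1 : g < u * u := L1 u huD huC hu1
      have h2 : u * u < g := by
        have hsm : t⁻¹ * g * t⁻¹ < 1 := by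
          have := hco t⁻¹ t⁻¹ g (t * t) (L1 t htD htC ht1).le
          have h' : t⁻¹ * (t * t) * t⁻¹ = 1 := by group
          rw [h'] at this
          rcases lt_or_eq_of_le this with h | h
          · exact h
          · exfalso
            have hgtt : g = t * t := by
              have e : t * (t⁻¹ * g * t⁻¹) * t = g := by group
              rw [← e, h]; group
            have hcontr := L1 t htD htC ht1
            rw [← hgtt] at hcontr
            exact absurd hcontr (lt_irrefl g)
        calc u * u = g * (t⁻¹ * g * t⁻¹) := by rw [hu]; group
        _ < g * 1 := mul_lt_mul_right hsm g
        _ = g := by simp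
      exact absurd (h1.trans h2) (lt_irrefl g)
    -- every element of D is a power of g times an element of C
    have hrep : ∀ x ∈ D, ∃ (m : ℤ) (c : G), c ∈ C ∧ x = g ^ m * c := by
      intro x hx
      obtain ⟨m, hm1, hm2⟩ := floor g hgD hg1' (arch g hgD hgC hg1) x hx
      set w : G := g ^ (-m) * x with hw
      have hxw : x = g ^ m * w := by rw [hw]; group
      have hw1 : (1:G) ≤ w := by
        have := mul_le_mul_right hm1 (g ^ (-m))
        have h' : g ^ (-m) * g ^ m = 1 := by group
        rw [← hw] at this
        rw [h'] at this
        exact this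
      have hwlt : w < g := by
        have := mul_lt_mul_right hm2 (g ^ (-m))
        rw [← hw] at this
        have h' : g ^ (-m) * g ^ (m + 1) = g := by group
        rw [h'] at this
        exact this
      have hwD : w ∈ D := mul_mem (zpow_mem hgD _) hx
      by_cases hwC : w ∈ C
      · exact ⟨m, w, hwC, hxw⟩
      · have hw1' : 1 < w := lt_of_le_of_ne hw1 (fun h => hwC (h ▸ C.one_mem))
        rcases L2 w hwD hwC hw1' with h | h
        · exact absurd (h.trans_lt hwlt) (lt_irrefl g)
        · refine ⟨m + 1, g⁻¹ * (g * w⁻¹)⁻¹ * g, conj_mem g hgD _ (inv_mem h), ?_⟩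
          rw [hxw]; group
    obtain ⟨p, c₁, hc₁, ha'⟩ := hrep a ha
    obtain ⟨q, c₂, hc₂, hb'⟩ := hrep b hb
    -- products of representations
    have repmul : ∀ (x : G) (k : ℤ) (c : G), c ∈ C → x = g ^ k * c →
        ∀ (y : G) (l : ℤ) (c' : G), c' ∈ C → y = g ^ l * c' →
        ∃ c'' : G, c'' ∈ C ∧ x * y = g ^ (k + l) * c'' := by
      intro x k c hc hxc y l c' hc' hyc
      refine ⟨(g ^ l)⁻¹ * c * g ^ l * c', mul_mem (conj_mem (g ^ l) (zpow_mem hgD l) c hc) hc', ?_⟩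
      rw [hxc, hyc]; group
    have repinv : ∀ (x : G) (k : ℤ) (c : G), c ∈ C → x = g ^ k * c →
        ∃ c'' : G, c'' ∈ C ∧ x⁻¹ = g ^ (-k) * c'' := by
      intro x k c hc hxc
      refine ⟨g ^ k * c⁻¹ * (g ^ k)⁻¹, conj_mem' (g ^ k) (zpow_mem hgD k) c⁻¹ (inv_mem hc), ?_⟩
      rw [hxc]; group
    obtain ⟨d₁, hd₁, hia⟩ := repinv a p c₁ hc₁ ha'
    obtain ⟨d₂, hd₂, hib⟩ := repinv b q c₂ hc₂ hb'
    obtain ⟨e₁, he₁, hm1⟩ := repmul _ _ _ hd₁ hia _ _ _ hd₂ hib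
    obtain ⟨e₂, he₂, hm2⟩ := repmul _ _ _ he₁ hm1 _ _ _ hc₁ ha'
    obtain ⟨e₃, he₃, hm3⟩ := repmul _ _ _ he₂ hm2 _ _ _ hc₂ hb'
    rw [show (-p + -q + p + q : ℤ) = 0 by ring, zpow_zero, one_mul] at hm3
    apply hgC
    show a⁻¹ * b⁻¹ * a * b ∈ C
    rw [hm3]
    exact he₃
  intro a ha b hb
  rcases le_total 1 (a⁻¹ * b⁻¹ * a * b) with h | h
  · exact key a ha b hb h
  · have h' : 1 ≤ b⁻¹ * a⁻¹ * b * a := by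
      have : (a⁻¹ * b⁻¹ * a * b)⁻¹ = b⁻¹ * a⁻¹ * b * a := by group
      rw [← this]
      simpa using inv_le_inv_iff.mpr h
    have := key b hb a ha h'
    have e : a⁻¹ * b⁻¹ * a * b = (b⁻¹ * a⁻¹ * b * a)⁻¹ := by group
    rw [e]
    exact inv_mem this
end

section
/- Let H be a polycyclic group and K ≤ H a subgroup of infinite index. Then the Hirsch length of K is strictly less than the Hirsch length of H. -/
open Subgroup Pointwise

section HirschAux

variable {G : Type*} [Group G]

lemma index_ne_zero_iff_finite' (X : Subgroup G) : X.index ≠ 0 ↔ Finite (G ⧸ X) := by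
  rw [Subgroup.index, Nat.card_ne_zero]
  exact ⟨fun h => h.2, fun h => ⟨inferInstance, h⟩⟩

lemma relindex_ne_zero_iff_finite' (X Y : Subgroup G) :
    X.relIndex Y ≠ 0 ↔ Finite (↥Y ⧸ X.subgroupOf Y) := index_ne_zero_iff_finite' _

lemma sup_inf_relindex (A N B : Subgroup G) [hN : N.Normal] (hAB : A ≤ B)
    (h : (A ⊓ N).relIndex (B ⊓ N) ≠ 0) : A.relIndex ((A ⊔ N) ⊓ B) ≠ 0 := by
  rw [relindex_ne_zero_iff_finite'] at h ⊢
  set M := (A ⊔ N) ⊓ B with hM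
  have hf0 : ∀ n : ↥(B ⊓ N), (n : G) ∈ M := by
    rintro ⟨n, hn⟩
    exact ⟨(le_sup_right : N ≤ A ⊔ N) hn.2, hn.1⟩
  let f0 : ↥(B ⊓ N) → ↥M := fun n => ⟨n, hf0 n⟩
  have hresp : ∀ a b : ↥(B ⊓ N),
      (QuotientGroup.leftRel ((A ⊓ N).subgroupOf (B ⊓ N))).r a b →
      (QuotientGroup.leftRel (A.subgroupOf M)).r (f0 a) (f0 b) := by
    intro a b hab
    rw [QuotientGroup.leftRel_apply] at hab ⊢
    exact (hab.1 : ((a⁻¹ * b : ↥(B ⊓ N)) : G) ∈ A)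
  let F : (↥(B ⊓ N) ⧸ (A ⊓ N).subgroupOf (B ⊓ N)) → (↥M ⧸ A.subgroupOf M) :=
    Quotient.map' f0 hresp
  have hsurj : Function.Surjective F := by
    intro q
    obtain ⟨m, rfl⟩ := QuotientGroup.mk_surjective q
    have hmem : (m : G) ∈ ((N : Set G) * (A : Set G)) := by
      rw [← Subgroup.normal_mul N A]
      have hm' : (m : G) ∈ A ⊔ N := m.2.1
      rwa [sup_comm] at hm'
    obtain ⟨n0, hn0s, a, has, hprod⟩ := Set.mem_mul.mp hmem
    have hn0 : n0 ∈ N := hn0s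
    have ha : a ∈ A := has
    have hn0B : n0 ∈ B ⊓ N := by
      constructor
      · have : n0 = (m : G) * a⁻¹ := by rw [← hprod]; group
        rw [this]
        exact B.mul_mem m.2.2 (B.inv_mem (hAB ha))
      · exact hn0
    refine ⟨QuotientGroup.mk ⟨n0, hn0B⟩, ?_⟩
    show Quotient.map' f0 hresp (Quotient.mk'' _) = _
    rw [Quotient.map'_mk'']
    rw [QuotientGroup.eq]
    show ((f0 ⟨n0, hn0B⟩ : ↥M)⁻¹ * m : G) ∈ A
    have : ((f0 ⟨n0, hn0B⟩ : ↥M)⁻¹ * m : G) = n0⁻¹ * m := rfl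
    rw [this, ← hprod]
    group
    exact ha
  exact Finite.of_surjective F hsurj

lemma cyclic_relindex (g : G) (hg : ∀ q : G, ∃ k : ℤ, q = g ^ k)
    (X Y : Subgroup G) (hXY : X ≤ Y) (hX : X ≠ ⊥) : X.relIndex Y ≠ 0 := by
  obtain ⟨⟨x, hxX⟩, hx1⟩ := Subgroup.ne_bot_iff_exists_ne_one.mp hX
  obtain ⟨k, rfl⟩ := hg x
  have hk : k ≠ 0 := by
    rintro rfl
    simp only [zpow_zero] at hx1
    exact hx1 rfl
  set K' : ℤ := (k.natAbs : ℤ) with hK'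
  have hK'pos : 0 < K' := by
    simp only [hK']
    exact_mod_cast Nat.pos_of_ne_zero (Int.natAbs_ne_zero.mpr hk)
  have hgK' : g ^ K' ∈ X := by
    rcases Int.natAbs_eq k with h | h
    · rw [hK', ← h]; exact hxX
    · have : g ^ K' = (g ^ k)⁻¹ := by
        rw [← zpow_neg]
        congr 1
        omega
      rw [this]
      exact inv_mem hxX
  have hfin : Finite (G ⧸ X) := by
    have hsurj : Function.Surjective (fun i : Fin k.natAbs => ((g ^ (i : ℤ) : G) : G ⧸ X)) := by
      intro q
      obtain ⟨y, rfl⟩ := QuotientGroup.mk_surjective q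
      obtain ⟨m, rfl⟩ := hg y
      have hr0 : 0 ≤ m % K' := Int.emod_nonneg m (by omega)
      have hrk : m % K' < K' := Int.emod_lt_of_pos m hK'pos
      refine ⟨⟨(m % K').toNat, by omega⟩, ?_⟩
      have hcast : (((m % K').toNat : ℕ) : ℤ) = m % K' := Int.toNat_of_nonneg hr0
      simp only [hcast]
      rw [QuotientGroup.eq]
      have : (g ^ (m % K'))⁻¹ * g ^ m = g ^ (K' * (m / K')) := by
        rw [← zpow_neg, ← zpow_add]
        congr 1
        have := Int.mul_ediv_add_emod m K'
        omega
      rw [this, zpow_mul]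
      exact zpow_mem hgK' _
    exact Finite.of_surjective _ hsurj
  have hidx : X.index ≠ 0 := (index_ne_zero_iff_finite' X).mpr hfin
  intro h0
  exact hidx (zero_dvd_iff.mp (h0 ▸ relIndex_dvd_index_of_le hXY))

lemma step_analysis {N C A B : Subgroup G} (hNC : N ≤ C)
    (hnorm : ∀ g ∈ C, ∀ x ∈ N, g⁻¹ * x * g ∈ N)
    {c0 : G} (hc0 : c0 ∈ C) (hcyc : ∀ x ∈ C, ∃ k : ℤ, x * (c0 ^ k)⁻¹ ∈ N)
    (hAB : A ≤ B) (hBC : B ≤ C) (hind : A.relIndex B = 0) :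
    (A ⊓ N).relIndex (B ⊓ N) = 0 ∨ (N.relIndex C = 0 ∧ A ≤ N ∧ ¬ B ≤ N) := by
  by_cases hNgood : (A ⊓ N).relIndex (B ⊓ N) = 0
  · exact Or.inl hNgood
  right
  haveI hNormal : (N.subgroupOf C).Normal := by
    constructor
    rintro ⟨n, hnC⟩ hn ⟨g, hgC⟩
    have hn' : n ∈ N := hn
    have := hnorm g⁻¹ (C.inv_mem hgC) n hn'
    rw [Subgroup.mem_subgroupOf]
    simpa [mul_assoc] using this
  set N₁ := N.subgroupOf C with hN₁
  set A₁ := A.subgroupOf C with hA₁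
  set B₁ := B.subgroupOf C with hB₁
  let π := QuotientGroup.mk' N₁
  have hA₁B₁ : A₁ ≤ B₁ := comap_mono hAB
  have hrel1 : A₁.relIndex B₁ = 0 := by
    rw [hA₁, hB₁, relIndex_subgroupOf hBC]; exact hind
  have hsplit : A₁.relIndex ((A₁ ⊔ N₁) ⊓ B₁) * ((A₁ ⊔ N₁) ⊓ B₁).relIndex B₁ = 0 := by
    rw [relIndex_mul_relIndex _ _ B₁ (le_inf le_sup_left hA₁B₁) inf_le_right]
    exact hrel1
  have hANfin : (A₁ ⊓ N₁).relIndex (B₁ ⊓ N₁) ≠ 0 := by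
    have e : (A₁ ⊓ N₁).relIndex (B₁ ⊓ N₁) = (A ⊓ N).relIndex (B ⊓ N) := by
      show ((A.subgroupOf C) ⊓ (N.subgroupOf C)).relIndex ((B.subgroupOf C) ⊓ (N.subgroupOf C)) = _
      rw [show (A.subgroupOf C) ⊓ (N.subgroupOf C) = (A ⊓ N).subgroupOf C from rfl,
        show (B.subgroupOf C) ⊓ (N.subgroupOf C) = (B ⊓ N).subgroupOf C from rfl]
      exact relIndex_subgroupOf (inf_le_of_left_le hBC)
    rw [e]; exact hNgood
  have h1 : A₁.relIndex ((A₁ ⊔ N₁) ⊓ B₁) ≠ 0 := sup_inf_relindex A₁ N₁ B₁ hA₁B₁ hANfin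
  have h2 : ((A₁ ⊔ N₁) ⊓ B₁).relIndex B₁ = 0 := by
    rcases mul_eq_zero.mp hsplit with h | h
    · exact absurd h h1
    · exact h
  have h3 : (Subgroup.map π A₁).relIndex (Subgroup.map π B₁) = 0 := by
    have e1 : Subgroup.comap π (Subgroup.map π A₁) = A₁ ⊔ N₁ := by
      rw [comap_map_eq, QuotientGroup.ker_mk']
    have e2 := relIndex_comap π B₁ (H := Subgroup.map π A₁)
    rw [e1, ← inf_relIndex_right] at e2
    rw [← e2]; exact h2
  have hNCinf : N.relIndex C = 0 := by
    by_contra hfin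
    have hfinQ : Finite (↥C ⧸ N₁) := by
      rw [← index_ne_zero_iff_finite']
      exact hfin
    have : (Subgroup.map π A₁).relIndex (Subgroup.map π B₁) ≠ 0 := by
      rw [relindex_ne_zero_iff_finite']
      infer_instance
    exact this h3
  refine ⟨hNCinf, ?_, ?_⟩
  · -- A ≤ N
    have hcycQ : ∀ q : ↥C ⧸ N₁, ∃ k : ℤ, q = (π ⟨c0, hc0⟩) ^ k := by
      intro q
      obtain ⟨x, rfl⟩ := QuotientGroup.mk'_surjective N₁ q
      obtain ⟨k, hk⟩ := hcyc (x : G) x.2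
      refine ⟨k, ?_⟩
      rw [← map_zpow]
      rw [QuotientGroup.mk'_eq_mk']
      refine ⟨x⁻¹ * ⟨c0, hc0⟩ ^ k, ?_, by group⟩
      show ((x⁻¹ * ⟨c0, hc0⟩ ^ k : ↥C) : G) ∈ N
      have hw : (c0 ^ k) * (x : G)⁻¹ ∈ N := by
        have := N.inv_mem hk
        simpa using this
      have := hnorm (x : G) (x.2) _ hw
      have e : (x : G)⁻¹ * (c0 ^ k * (x : G)⁻¹) * (x : G) = (x : G)⁻¹ * c0 ^ k := by group
      rw [e] at this
      simpa using this
    have hbot : Subgroup.map π A₁ = ⊥ := by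
      by_contra hne
      exact (cyclic_relindex _ hcycQ _ _ (Subgroup.map_mono hA₁B₁) hne) h3
    have hker : A₁ ≤ N₁ := by
      rw [← QuotientGroup.ker_mk' N₁]
      exact (Subgroup.map_eq_bot_iff _).mp hbot
    intro a ha
    exact hker (show (⟨a, hBC (hAB ha)⟩ : ↥C) ∈ A₁ from ha)
  · -- ¬ B ≤ N
    intro hBN
    have hBbot : Subgroup.map π B₁ = ⊥ := by
      rw [Subgroup.map_eq_bot_iff _]
      have hk : π.ker = N₁ := QuotientGroup.ker_mk' N₁
      rw [hk]
      intro x hx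
      exact hBN hx
    have hAbot : Subgroup.map π A₁ = ⊥ :=
      le_bot_iff.mp (hBbot ▸ Subgroup.map_mono hA₁B₁)
    rw [hAbot, hBbot, relIndex_self] at h3
    exact one_ne_zero h3

lemma chain_le {m : ℕ} {c : ℕ → Subgroup G} (hc : ∀ j < m, c j ≤ c (j+1)) :
    ∀ {i j}, i ≤ j → j ≤ m → c i ≤ c j := by
  intro i j hij hjm
  induction j with
  | zero => rw [Nat.le_zero.mp hij]
  | succ j ih =>
    rcases Nat.lt_or_ge i (j+1) with h | h
    · exact (ih (by omega) (by omega)).trans (hc j (by omega))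
    · have : i = j + 1 := by omega
      rw [this]

lemma chainBound (n : ℕ) (s : ℕ → Subgroup G) (h0 : s 0 = ⊥) :
    (∀ i < n, s i ≤ s (i+1) ∧ (∀ g ∈ s (i+1), ∀ x ∈ s i, g⁻¹ * x * g ∈ s i) ∧
      (∃ c ∈ s (i+1), ∀ x ∈ s (i+1), ∃ k : ℤ, x * (c ^ k)⁻¹ ∈ s i)) →
    ∀ (m : ℕ) (c : ℕ → Subgroup G), (∀ j < m, c j ≤ c (j+1)) →
    (∀ j < m, (c j).relIndex (c (j+1)) = 0) → c m ≤ s n →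
    m ≤ ((Finset.range n).filter (fun i => (s i).relIndex (s (i+1)) = 0)).card := by
  induction n with
  | zero =>
    intro _ m c hmono hrel htop
    cases m with
    | zero => simp
    | succ m' =>
      exfalso
      rw [h0, le_bot_iff] at htop
      have h2 : c m' = ⊥ := le_bot_iff.mp (htop ▸ hmono m' (Nat.lt_succ_self m'))
      have := hrel m' (Nat.lt_succ_self m')
      rw [h2, htop, relIndex_self] at this
      exact one_ne_zero this
  | succ n ih =>
    intro hs m c hmono hrel htop
    obtain ⟨hmN, hnorm, c0, hc0, hcyc⟩ := hs n (Nat.lt_succ_self n)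
    have hcnt : ((Finset.range (n+1)).filter
          (fun i => (s i).relIndex (s (i+1)) = 0)).card =
        ((Finset.range n).filter (fun i => (s i).relIndex (s (i+1)) = 0)).card
          + (if (s n).relIndex (s (n+1)) = 0 then 1 else 0) := by
      rw [Finset.range_add_one, Finset.filter_insert]
      split
      · rw [Finset.card_insert_of_notMem (by simp)]
      · simp
    have hstep : ∀ j < m, ((c j ⊓ s n).relIndex (c (j+1) ⊓ s n) = 0) ∨
        ((s n).relIndex (s (n+1)) = 0 ∧ c j ≤ s n ∧ ¬ c (j+1) ≤ s n) := by
      intro j hj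
      exact step_analysis hmN hnorm hc0 hcyc (hmono j hj)
        ((chain_le hmono (by omega) (le_refl m)).trans htop) (hrel j hj)
    have ihs : ∀ i < n, s i ≤ s (i+1) ∧ (∀ g ∈ s (i+1), ∀ x ∈ s i, g⁻¹ * x * g ∈ s i) ∧
        (∃ c ∈ s (i+1), ∀ x ∈ s (i+1), ∃ k : ℤ, x * (c ^ k)⁻¹ ∈ s i) :=
      fun i hi => hs i (by omega)
    by_cases hbad : ∃ j, j < m ∧ ¬ ((c j ⊓ s n).relIndex (c (j+1) ⊓ s n) = 0)
    · obtain ⟨j0, hj0m, hj0bad⟩ := hbad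
      obtain h | ⟨hfin, hj0AN, hj0BN⟩ := hstep j0 hj0m
      · exact absurd h hj0bad
      have hgood : ∀ j < m, j ≠ j0 → (c j ⊓ s n).relIndex (c (j+1) ⊓ s n) = 0 := by
        intro j hj hne
        rcases hstep j hj with h | ⟨_, hAN, hBN⟩
        · exact h
        exfalso
        rcases lt_or_gt_of_ne hne with hlt | hgt
        · exact hBN ((chain_le hmono (by omega) (by omega)).trans hj0AN)
        · exact hj0BN ((chain_le hmono (by omega : j0 + 1 ≤ j) (by omega)).trans hAN)
      set d : ℕ → Subgroup G := fun i => if i < j0 then c i ⊓ s n else c (i+1) ⊓ s n with hd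
      have hdmono : ∀ i < m - 1, d i ≤ d (i+1) := by
        intro i hi
        simp only [hd]
        split <;> split
        · exact inf_le_inf_right _ (hmono i (by omega))
        · exact inf_le_inf_right _ (chain_le hmono (by omega) (by omega))
        · omega
        · exact inf_le_inf_right _ (hmono (i+1) (by omega))
      have hdrel : ∀ i < m - 1, (d i).relIndex (d (i+1)) = 0 := by
        intro i hi
        simp only [hd]
        split <;> split
        · exact hgood i (by omega) (by omega)
        · -- i < j0, ¬ i+1 < j0, so j0 = i+1 (as j0 ≤ m-1... j0 could equal i+1)
          rename_i h1 h2
          exact relIndex_eq_zero_of_le_right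
            (inf_le_inf_right _ (hmono (i+1) (by omega)))
            (hgood i (by omega) (by omega))
        · omega
        · rename_i h1 h2
          exact hgood (i+1) (by omega) (by omega)
      have hdtop : d (m-1) ≤ s n := by
        simp only [hd]; split <;> exact inf_le_right
      have hIH := ih ihs (m-1) d hdmono hdrel hdtop
      rw [hcnt, if_pos hfin]
      omega
    · push_neg at hbad
      have hIH := ih ihs m (fun i => c i ⊓ s n)
        (fun j hj => inf_le_inf_right _ (hmono j hj))
        (fun j hj => hbad j hj) inf_le_right
      rw [hcnt]
      omega

lemma cnt_succ (s : ℕ → Subgroup G) (n : ℕ) :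
    ((Finset.range (n+1)).filter (fun i => (s i).relIndex (s (i+1)) = 0)).card =
      ((Finset.range n).filter (fun i => (s i).relIndex (s (i+1)) = 0)).card
        + (if (s n).relIndex (s (n+1)) = 0 then 1 else 0) := by
  rw [Finset.range_add_one, Finset.filter_insert]
  split
  · rw [Finset.card_insert_of_notMem (by simp)]
  · simp

lemma exists_chain (n : ℕ) (s : ℕ → Subgroup G) (hmono : ∀ i < n, s i ≤ s (i+1)) :
    ∃ c : ℕ → Subgroup G,
      (∀ j < ((Finset.range n).filter (fun i => (s i).relIndex (s (i+1)) = 0)).card,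
        c j ≤ c (j+1)) ∧
      (∀ j < ((Finset.range n).filter (fun i => (s i).relIndex (s (i+1)) = 0)).card,
        (c j).relIndex (c (j+1)) = 0) ∧
      c ((Finset.range n).filter (fun i => (s i).relIndex (s (i+1)) = 0)).card = s n := by
  induction n with
  | zero => exact ⟨fun _ => s 0, by simp, by simp, by simp⟩
  | succ n ih =>
    obtain ⟨c, hm, hr, htop⟩ := ih (fun i hi => hmono i (by omega))
    set h := ((Finset.range n).filter (fun i => (s i).relIndex (s (i+1)) = 0)).card with hh
    rw [cnt_succ]
    by_cases hfin : (s n).relIndex (s (n+1)) = 0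
    · rw [if_pos hfin]
      refine ⟨fun j => if j ≤ h then c j else s (n+1), ?_, ?_, ?_⟩
      · intro j hj
        dsimp only
        rw [if_pos (show j ≤ h by omega)]
        by_cases hj1 : j + 1 ≤ h
        · rw [if_pos hj1]; exact hm j (by omega)
        · rw [if_neg hj1, show j = h from by omega, htop]
          exact hmono n (by omega)
      · intro j hj
        dsimp only
        rw [if_pos (show j ≤ h by omega)]
        by_cases hj1 : j + 1 ≤ h
        · rw [if_pos hj1]; exact hr j (by omega)
        · rw [if_neg hj1, show j = h from by omega, htop]
          exact hfin
      · dsimp only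
        rw [if_neg (by omega)]
    · rw [if_neg hfin, add_zero]
      refine ⟨fun j => if j < h then c j else s (n+1), ?_, ?_, ?_⟩
      · intro j hj
        dsimp only
        rw [if_pos (show j < h by omega)]
        by_cases hj1 : j + 1 < h
        · rw [if_pos hj1]; exact hm j (by omega)
        · rw [if_neg hj1]
          refine (hm j (by omega)).trans ?_
          rw [show j + 1 = h from by omega, htop]
          exact hmono n (by omega)
      · intro j hj
        dsimp only
        rw [if_pos (show j < h by omega)]
        by_cases hj1 : j + 1 < h
        · rw [if_pos hj1]; exact hr j (by omega)
        · rw [if_neg hj1]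
          refine relIndex_eq_zero_of_le_right ?_ (hr j (by omega))
          rw [show j + 1 = h from by omega, htop]
          exact hmono n (by omega)
      · dsimp only
        rw [if_neg (by omega)]

end HirschAux

lemma relindex_map_subtype' {H : Type*} [Group H] (K : Subgroup H) (A B : Subgroup ↥K) :
    (A.map K.subtype).relIndex (B.map K.subtype) = A.relIndex B := by
  have := Subgroup.relIndex_comap K.subtype B (H := A.map K.subtype)
  rw [Subgroup.comap_map_eq_self_of_injective K.subtype_injective] at this
  exact this.symm

def HasHirschLength (G : Type*) [Group G] (h : ℕ) : Prop :=
  ∃ (n : ℕ) (s : ℕ → Subgroup G),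
    s 0 = ⊥ ∧ s n = ⊤ ∧
    (∀ i < n, s i ≤ s (i+1) ∧
      (∀ g ∈ s (i+1), ∀ x ∈ s i, g⁻¹ * x * g ∈ s i) ∧
      (∃ c ∈ s (i+1), ∀ x ∈ s (i+1), ∃ k : ℤ, x * (c ^ k)⁻¹ ∈ s i)) ∧
    ((Finset.range n).filter (fun i => (s i).relIndex (s (i+1)) = 0)).card = h

theorem stmt17 {H : Type*} [Group H] (K : Subgroup H) (hinf : K.index = 0)
    (hH hK : ℕ) (h1 : HasHirschLength H hH) (h2 : HasHirschLength ↥K hK) :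
    hK < hH := by
  obtain ⟨n, s, h0, htopH, hsH, hcardH⟩ := h1
  obtain ⟨n', s', h0', htopK, hsK, hcardK⟩ := h2
  obtain ⟨c, hcm, hcr, hct⟩ := exists_chain n' s' (fun i hi => (hsK i hi).1)
  rw [hcardK] at hcm hcr hct
  rw [htopK] at hct
  set cH : ℕ → Subgroup H := fun j => if j ≤ hK then (c j).map K.subtype else ⊤ with hcH
  have hmono : ∀ j < hK + 1, cH j ≤ cH (j+1) := by
    intro j hj
    simp only [hcH]
    rw [if_pos (show j ≤ hK by omega)]
    by_cases hj1 : j + 1 ≤ hK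
    · rw [if_pos hj1]
      exact Subgroup.map_mono (hcm j (by omega))
    · rw [if_neg hj1]
      exact le_top
  have hrel : ∀ j < hK + 1, (cH j).relIndex (cH (j+1)) = 0 := by
    intro j hj
    simp only [hcH]
    rw [if_pos (show j ≤ hK by omega)]
    by_cases hj1 : j + 1 ≤ hK
    · rw [if_pos hj1, relindex_map_subtype']
      exact hcr j (by omega)
    · rw [if_neg hj1, show j = hK from by omega, hct]
      rw [Subgroup.relIndex_top_right]
      have : Subgroup.map K.subtype ⊤ = K := by
        rw [← MonoidHom.range_eq_map, K.range_subtype]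
      rw [this]
      exact hinf
  have hfinal := chainBound n s h0 hsH (hK + 1) cH hmono hrel (htopH ▸ le_top)
  rw [hcardH] at hfinal
  omega
end
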